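/- In any execution of the multi-writer auditable register implementation (Algorithm 1), if writeMax(k, iv, _) and writeMax(k', iv', _) are both applied to the max register M, then: (1) if k = k' then iv = iv', and (2) if k < k' then iv ≤ iv' componentwise. Consequently, the successive m-vectors stored in M.ridx form an increasing sequence under the componentwise order. -/

import Mathlib

/-!
# An operational model of Algorithm 1 (multi-writer auditable register)

The algorithm implements an `n`-writer `m`-reader auditable register from an
unbounded array `SLR[-1,0,1,...]` of `(m+n)`-sliding registers, a max register
`M` storing a triple `(widx, ridx, auditset)` (ordered by its first field,
modelled here as an atomic object), and an array `H[1..m]` of single-writer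
registers.  Each line of the pseudo-code is a step; readers, writers and
auditors are modelled by explicit program counters, and executions are
alternating sequences of configurations and labelled steps starting from the
initial configuration.
-/

namespace Alg1

/-- Values stored in the auditable register. -/
abbrev Val := ℕ

/-- Entries of the sliding registers: `w`-tuples `(w, j, v, h)` posted by
    writers (with `h` a helping set of readers) and reader identifiers. -/
inductive Entry (m n : ℕ) where
  | w (j : Fin n) (v : Val) (h : Finset (Fin m))
  | r (i : Fin m)

variable {m n : ℕ}

def Entry.isW : Entry m n → Bool
  | .w _ _ _ => true
  | .r _ => false

/-- Does the window contain a `w`-tuple? -/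
def hasW (win : List (Entry m n)) : Bool := win.any Entry.isW

/-- The first `w`-tuple in a window, if any. -/
def firstW : List (Entry m n) → Option (Fin n × Val × Finset (Fin m))
  | [] => none
  | .w j v h :: _ => some (j, v, h)
  | .r _ :: rest => firstW rest

/-- `getValue`: the value of the first `w`-tuple of a window (default `0`). -/
def wval (win : List (Entry m n)) : Val := ((firstW win).map fun t => t.2.1).getD 0

/-- Reader identifiers that precede every `w`-tuple of a window. -/
def preW : List (Entry m n) → Finset (Fin m)
  | [] => ∅
  | .w _ _ _ :: _ => ∅
  | .r i :: rest => insert i (preW rest)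

/-- `READERS(win)`: readers preceding every `w`-tuple, together with the
    helping set of the first `w`-tuple, if any. -/
def readersOf (win : List (Entry m n)) : Finset (Fin m) :=
  preW win ∪ ((firstW win).map fun t => t.2.2).getD ∅

/-- Content of the max register `M`: a triple `(widx, ridx, auditset)`,
    ordered by the first field. -/
structure MVal (m : ℕ) where
  widx : ℤ
  ridx : Fin m → ℤ
  aud : Finset (Fin m × Val)

/-- Semantics of `writeMax` on `M`. -/
def wmax (old new : MVal m) : MVal m := if old.widx < new.widx then new else old

/-- The triple written to `M` after reading window `win` from `SLR[x]`:
    `(x+1, ridx[j ∈ READERS(win)] := x, auditset ∪ {(j, lv) : j ∈ READERS(win)})`. -/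
def mArg (mc : MVal m) (win : List (Entry m n)) (x : ℤ) (lv : Val) : MVal m where
  widx := x + 1
  ridx := fun j => if j ∈ readersOf win then x else mc.ridx j
  aud := mc.aud ∪ (readersOf win).image fun j => (j, lv)

/-- Write to a `k`-sliding register: append, keeping the last `k` entries. -/
def slide (k : ℕ) (l : List (Entry m n)) (e : Entry m n) : List (Entry m n) :=
  let l' := l ++ [e]
  l'.drop (l'.length - k)

/-- Program counter of a reader (one state per line of the pseudo-code). -/
inductive RPC where
  | idle
  | precheck   -- read `SLR[lsr]` (line `rd_last_wd`)
  | preM       -- read `M` (line `new_write`)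
  | preHelp    -- `writeMax` on `M` (line `rd_help_M1`)
  | loopM      -- read `M` at the head of the repeat loop (line `rd_M`)
  | helpVal    -- found help: read `SLR[lsr-1]` (`getValue`, line `rd_return_help`)
  | annH       -- write `H[i] := lsr` (line `rd_annouce_att`)
  | wSLR       -- write `i` to `SLR[lsr]` (line `rd_do_att`)
  | rSLR       -- read `SLR[lsr]` (line `rd_do_att`)
  | gVal       -- read `SLR[lsr-1]` (`getValue`, line `rd_val`)
  | helpChk    -- help the pending write to complete (line `rd_help_M2`)
  | loopEnd    -- evaluate the until condition (line `rd_att_success`)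
  | retNow     -- return `lval`

structure RState (m n : ℕ) where
  lsr : ℤ
  lval : Val
  mc : MVal m
  win : List (Entry m n)
  it : ℕ          -- number of iterations of the repeat loop of the current READ
  pc : RPC

/-- Program counter of a writer. -/
inductive WPC where
  | idle
  | readM    -- read `M` (line `w_read_M`)
  | scanH    -- read `H[k]` (line `w_att`)
  | scanS    -- read `SLR[a_k]` (line `w_help_wd`)
  | post     -- write the `w`-tuple to `SLR[widx]` (line `w_write_SLR`)
  | postR    -- read `SLR[widx]`
  | postV    -- read `SLR[widx-1]` (`getValue`)
  | postM    -- `writeMax` on `M` (line `w_write_M`)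
  | wret     -- return

structure WState (m n : ℕ) where
  v : Val
  mc : MVal m
  toHelp : Finset (Fin m)
  k : ℕ
  a : ℤ
  win : List (Entry m n)
  val : Val
  pc : WPC

/-- Program counter of an auditor. -/
inductive APC where
  | idle
  | aM       -- read `M` (line `adt_read_M`)
  | aR       -- read `SLR[widx]` (line `adt_val`)
  | aV       -- read `SLR[widx-1]` (`getValue`, line `adt_val`)
  | aret     -- return the audit set

structure AState (m n : ℕ) where
  mc : MVal m
  win : List (Entry m n)
  val : Val
  pc : APC

/-- Processes: `m` readers, `n` writers, and arbitrarily many auditors. -/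
inductive Proc (m n : ℕ) where
  | rdr (i : Fin m)
  | wtr (j : Fin n)
  | adt (a : ℕ)
  deriving DecidableEq

/-- A configuration: shared memory plus the local state of every process. -/
structure Config (m n : ℕ) where
  slr : ℤ → List (Entry m n)
  M : MVal m
  H : Fin m → ℤ
  rst : Fin m → RState m n
  wst : Fin n → WState m n
  ast : ℕ → AState m n

/-- Step labels: invocations and responses of high-level operations, and
    primitive operations applied to the base objects. -/
inductive Lbl (m n : ℕ) where
  | invRead (i : Fin m)
  | respRead (i : Fin m) (v : Val)
  | invWrite (j : Fin n) (v : Val)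
  | respWrite (j : Fin n)
  | invAudit (a : ℕ)
  | respAudit (a : ℕ) (A : Finset (Fin m × Val))
  | slrRead (p : Proc m n) (x : ℤ) (win : List (Entry m n))
  | slrWrite (p : Proc m n) (x : ℤ) (e : Entry m n)
  | mRead (p : Proc m n) (v : MVal m)
  | mWrite (p : Proc m n) (v : MVal m)
  | hRead (j : Fin n) (k : Fin m) (a : ℤ)
  | hWrite (i : Fin m) (x : ℤ)
  | tau (p : Proc m n)

def upR (c : Config m n) (i : Fin m) (s : RState m n) : Config m n :=
  { c with rst := Function.update c.rst i s }

def upW (c : Config m n) (j : Fin n) (s : WState m n) : Config m n :=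
  { c with wst := Function.update c.wst j s }

def upA (c : Config m n) (a : ℕ) (s : AState m n) : Config m n :=
  { c with ast := Function.update c.ast a s }

/-- The transition relation of Algorithm 1. -/
def Step (c : Config m n) (l : Lbl m n) (c' : Config m n) : Prop :=
  match l with
  | .invRead i =>
      let s := c.rst i
      s.pc = .idle ∧
      c' = upR c i { s with it := 0, pc := if 0 ≤ s.lsr then RPC.precheck else RPC.loopM }
  | .respRead i v =>
      let s := c.rst i
      s.pc = .retNow ∧ v = s.lval ∧ c' = upR c i { s with pc := .idle }
  | .invWrite j v =>
      let s := c.wst j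
      s.pc = .idle ∧ c' = upW c j { s with v := v, pc := .readM }
  | .respWrite j =>
      let s := c.wst j
      s.pc = .wret ∧ c' = upW c j { s with pc := .idle }
  | .invAudit a =>
      let s := c.ast a
      s.pc = .idle ∧ c' = upA c a { s with pc := .aM }
  | .respAudit a A =>
      let s := c.ast a
      s.pc = .aret ∧
      A = s.mc.aud ∪ (readersOf s.win).image (fun j => (j, s.val)) ∧
      c' = upA c a { s with pc := .idle }
  | .slrRead p x win =>
      win = c.slr x ∧
      (match p with
       | .rdr i =>
          let s := c.rst i
          (s.pc = .precheck ∧ x = s.lsr ∧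
             c' = upR c i { s with win := win, pc := if hasW win then RPC.preM else RPC.retNow }) ∨
          (s.pc = .helpVal ∧ x = s.lsr - 1 ∧
             c' = upR c i { s with lval := wval win, pc := .retNow }) ∨
          (s.pc = .rSLR ∧ x = s.lsr ∧
             c' = upR c i { s with win := win, pc := .gVal }) ∨
          (s.pc = .gVal ∧ x = s.lsr - 1 ∧
             c' = upR c i { s with lval := wval win, pc := .helpChk })
       | .wtr j =>
          let s := c.wst j
          (s.pc = .scanS ∧ x = s.a ∧
             (∃ hk : s.k < m,
               c' = upW c j { s with toHelp := if (⟨s.k, hk⟩ : Fin m) ∈ readersOf win then s.toHelp else insert (⟨s.k, hk⟩ : Fin m) s.toHelp, k := s.k + 1, pc := .scanH })) ∨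
          (s.pc = .postR ∧ x = s.mc.widx ∧
             c' = upW c j { s with win := win, pc := .postV }) ∨
          (s.pc = .postV ∧ x = s.mc.widx - 1 ∧
             c' = upW c j { s with val := wval win, pc := .postM })
       | .adt a =>
          let s := c.ast a
          (s.pc = .aR ∧ x = s.mc.widx ∧
             c' = upA c a { s with win := win, pc := .aV }) ∨
          (s.pc = .aV ∧ x = s.mc.widx - 1 ∧
             c' = upA c a { s with val := wval win, pc := .aret }))
  | .slrWrite p x e =>
      (match p with
       | .rdr i =>
          let s := c.rst i
          s.pc = .wSLR ∧ x = s.lsr ∧ e = .r i ∧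
          c' = { upR c i { s with pc := .rSLR } with
                 slr := Function.update c.slr x (slide (m + n) (c.slr x) e) }
       | .wtr j =>
          let s := c.wst j
          s.pc = .post ∧ x = s.mc.widx ∧ e = .w j s.v s.toHelp ∧
          c' = { upW c j { s with pc := .postR } with
                 slr := Function.update c.slr x (slide (m + n) (c.slr x) e) }
       | .adt _ => False)
  | .mRead p v =>
      v = c.M ∧
      (match p with
       | .rdr i =>
          let s := c.rst i
          (s.pc = .preM ∧
             c' = upR c i { s with mc := v, pc := if v.widx = s.lsr then RPC.preHelp else RPC.loopM }) ∨
          (s.pc = .loopM ∧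
             c' = upR c i (if s.lsr < v.ridx i then
                { s with mc := v, it := s.it + 1, lsr := v.ridx i, pc := .helpVal }
              else
                { s with mc := v, it := s.it + 1, lsr := v.widx, pc := .annH }))
       | .wtr j =>
          let s := c.wst j
          s.pc = .readM ∧
          c' = upW c j { s with mc := v, toHelp := ∅, k := 0, pc := .scanH }
       | .adt a =>
          let s := c.ast a
          s.pc = .aM ∧ c' = upA c a { s with mc := v, pc := .aR })
  | .mWrite p v =>
      (match p with
       | .rdr i =>
          let s := c.rst i
          (s.pc = .preHelp ∧ v = mArg s.mc s.win s.lsr s.lval ∧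
             c' = { upR c i { s with pc := .loopM } with M := wmax c.M v }) ∨
          (s.pc = .helpChk ∧ hasW s.win = true ∧ v = mArg s.mc s.win s.lsr s.lval ∧
             c' = { upR c i { s with pc := .loopEnd } with M := wmax c.M v })
       | .wtr j =>
          let s := c.wst j
          s.pc = .postM ∧ v = mArg s.mc s.win s.mc.widx s.val ∧
          c' = { upW c j { s with pc := .wret } with M := wmax c.M v }
       | .adt _ => False)
  | .hRead j k a =>
      let s := c.wst j
      s.pc = .scanH ∧ (k : ℕ) = s.k ∧ a = c.H k ∧
      c' = upW c j (if s.mc.ridx k < a then { s with a := a, pc := .scanS }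
                    else { s with k := s.k + 1 })
  | .hWrite i x =>
      let s := c.rst i
      s.pc = .annH ∧ x = s.lsr ∧
      c' = { upR c i { s with pc := .wSLR } with H := Function.update c.H i x }
  | .tau p =>
      match p with
      | .rdr i =>
          let s := c.rst i
          (s.pc = .helpChk ∧ hasW s.win = false ∧
             c' = upR c i { s with pc := .loopEnd }) ∨
          (s.pc = .loopEnd ∧
             c' = upR c i { s with pc := if i ∈ readersOf s.win then RPC.retNow else RPC.loopM })
      | .wtr j =>
          let s := c.wst j
          s.pc = .scanH ∧ s.k = m ∧ c' = upW c j { s with pc := .post }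
      | .adt _ => False

/-- The initial configuration: `SLR[-1]` holds `(w, j₀, v₀, ∅)`, all other
    sliding registers are empty, `M = (0, [-1,…,-1], ∅)`, `H = [-1,…,-1]`,
    and every process is idle (readers start with `lsr = -1`). -/
def init (m n : ℕ) (v0 : Val) (j0 : Fin n) : Config m n where
  slr := fun x => if x = -1 then [.w j0 v0 ∅] else []
  M := ⟨0, fun _ => -1, ∅⟩
  H := fun _ => -1
  rst := fun _ => ⟨-1, v0, ⟨0, fun _ => -1, ∅⟩, [], 0, .idle⟩
  wst := fun _ => ⟨v0, ⟨0, fun _ => -1, ∅⟩, ∅, 0, -1, [], v0, .idle⟩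
  ast := fun _ => ⟨⟨0, fun _ => -1, ∅⟩, [], v0, .idle⟩

/-- A finite execution of Algorithm 1: configurations `cfg 0, …, cfg len`
    connected by labelled steps. -/
structure Exec (m n : ℕ) (v0 : Val) (j0 : Fin n) where
  len : ℕ
  cfg : ℕ → Config m n
  lbl : ℕ → Lbl m n
  h0 : cfg 0 = init m n v0 j0
  hstep : ∀ t, t < len → Step (cfg t) (lbl t) (cfg (t + 1))

variable {v0 : Val} {j0 : Fin n}

/-! ### Derived notions -/

/-- The process performing a step. -/
def procOf : Lbl m n → Proc m n
  | .invRead i => .rdr i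
  | .respRead i _ => .rdr i
  | .invWrite j _ => .wtr j
  | .respWrite j => .wtr j
  | .invAudit a => .adt a
  | .respAudit a _ => .adt a
  | .slrRead p _ _ => p
  | .slrWrite p _ _ => p
  | .mRead p _ => p
  | .mWrite p _ => p
  | .hRead j _ _ => .wtr j
  | .hWrite i _ => .rdr i
  | .tau p => p

/-- The label writes a `w`-tuple to `SLR[x]`. -/
def isWWrite (l : Lbl m n) (x : ℤ) : Prop :=
  ∃ p j v h, l = .slrWrite p x (.w j v h)

/-- Step `t` is the first write of a `w`-tuple to `SLR[x]` in the execution. -/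
def FirstWWriteAt (E : Exec m n v0 j0) (x : ℤ) (t : ℕ) : Prop :=
  t < E.len ∧ isWWrite (E.lbl t) x ∧ ∀ t', t' < t → ¬ isWWrite (E.lbl t') x

/-- Step `t` changes `M.widx` from `ℓ - 1` to `ℓ`. -/
def WidxChangeAt (E : Exec m n v0 j0) (ℓ : ℤ) (t : ℕ) : Prop :=
  t < E.len ∧ (∃ p v, E.lbl t = .mWrite p v) ∧
  (E.cfg t).M.widx = ℓ - 1 ∧ (E.cfg (t + 1)).M.widx = ℓ

/-- `x` is the largest index of a sliding register containing a `w`-tuple. -/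
def WIDXis (c : Config m n) (x : ℤ) : Prop :=
  hasW (c.slr x) = true ∧ ∀ y : ℤ, x < y → hasW (c.slr y) = false

/-- Configuration in region `D_ℓ`: `M.widx = ℓ = WIDX + 1`. -/
def inD (c : Config m n) (ℓ : ℤ) : Prop := c.M.widx = ℓ ∧ WIDXis c (ℓ - 1)

/-- Configuration in region `E_ℓ`: `M.widx = ℓ = WIDX`. -/
def inE (c : Config m n) (ℓ : ℤ) : Prop := c.M.widx = ℓ ∧ WIDXis c ℓ

/-! ### Classification of operations, and linearizations -/

/-- Classification of the operations of Algorithm 1. -/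
inductive Kind where
  | silentR | directR | helpedR | visibleW | hiddenW | defA | nondefA
  deriving DecidableEq

/-- Rank used by the linearization rules `R1`–`R4` within a block of
    operations with the same index. -/
def rank : Kind → ℕ
  | .silentR => 0
  | .directR => 0
  | .nondefA => 0
  | .helpedR => 1
  | .defA => 2
  | .hiddenW => 3
  | .visibleW => 4

def Kind.isRead : Kind → Prop
  | .silentR => True | .directR => True | .helpedR => True
  | _ => False

def Kind.isWrite : Kind → Prop
  | .visibleW => True | .hiddenW => True
  | _ => False

def Kind.isAudit : Kind → Prop
  | .defA => True | .nondefA => True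
  | _ => False

/-- The data of a classified operation: its process, invocation step, optional
    response step, kind, associated sliding-register index `idx`, its
    characteristic step `key` on `SLR[idx]` (used by the linearization rules),
    its value (return value of a READ / input of a WRITE) and, for an AUDIT,
    the returned audit set. -/
structure OpData (m n : ℕ) where
  proc : Proc m n
  inv : ℕ
  resp : Option ℕ
  kind : Kind
  idx : ℤ
  key : ℕ
  val : Val
  aset : Finset (Fin m × Val)

/-- The label is a response event of process `p`. -/
def isRespOf (l : Lbl m n) (p : Proc m n) : Prop :=
  (∃ i v, p = .rdr i ∧ l = .respRead i v) ∨
  (∃ j, p = .wtr j ∧ l = .respWrite j) ∨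
  (∃ a A, p = .adt a ∧ l = .respAudit a A)

/-- `resp` is the matching response of the operation of `p` invoked at `a`
    (or the operation is pending if `resp = none`). -/
def RespMatch (E : Exec m n v0 j0) (p : Proc m n) (a : ℕ) : Option ℕ → Prop
  | some b => a < b ∧ b < E.len ∧ isRespOf (E.lbl b) p ∧
      ∀ t, a < t → t < b → ¬ isRespOf (E.lbl t) p
  | none => ∀ t, a < t → t < E.len → ¬ isRespOf (E.lbl t) p

/-- `x` is the smallest index `> x0` of a sliding register in which reader `i`
    is recorded (evaluated in the final configuration). -/
def minRecIdx (E : Exec m n v0 j0) (i : Fin m) (x0 x : ℤ) : Prop :=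
  x0 < x ∧ i ∈ readersOf ((E.cfg E.len).slr x) ∧
    ∀ y : ℤ, x0 < y → y < x → i ∉ readersOf ((E.cfg E.len).slr y)

/-- The return value of a classified READ: the actual response if the READ is
    complete; for a pending classified READ (completed in `H'`), the value of
    the first `w`-tuple of `SLR[idx-1]`. -/
def ReadValOK (E : Exec m n v0 j0) (o : OpData m n) (i : Fin m) : Prop :=
  match o.resp with
  | some b => E.lbl b = .respRead i o.val
  | none => o.val = wval ((E.cfg E.len).slr (o.idx - 1))

/-- `o` describes a classified operation of the execution `E`. -/
def IsOp (E : Exec m n v0 j0) (o : OpData m n) : Prop :=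
  o.inv < E.len ∧ RespMatch E o.proc o.inv o.resp ∧
  match o.kind with
  | .silentR =>
      ∃ i b win, o.proc = .rdr i ∧ o.resp = some b ∧
        E.lbl o.inv = .invRead i ∧
        (∃ t', t' < o.inv ∧ E.lbl t' = .invRead i) ∧
        o.idx = ((E.cfg o.inv).rst i).lsr ∧
        o.inv < o.key ∧ o.key < b ∧
        E.lbl o.key = .slrRead (.rdr i) o.idx win ∧
        ((E.cfg o.key).rst i).pc = .precheck ∧
        hasW win = false ∧
        E.lbl b = .respRead i o.val ∧
        o.aset = ∅
  | .directR =>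
      ∃ i, o.proc = .rdr i ∧ E.lbl o.inv = .invRead i ∧
        minRecIdx E i ((E.cfg o.inv).rst i).lsr o.idx ∧
        i ∈ preW ((E.cfg E.len).slr o.idx) ∧
        o.inv < o.key ∧ o.key < E.len ∧
        E.lbl o.key = .slrWrite (.rdr i) o.idx (.r i) ∧
        (∀ b, o.resp = some b → o.key < b) ∧
        ReadValOK E o i ∧ o.aset = ∅
  | .helpedR =>
      ∃ i, o.proc = .rdr i ∧ E.lbl o.inv = .invRead i ∧
        minRecIdx E i ((E.cfg o.inv).rst i).lsr o.idx ∧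
        i ∉ preW ((E.cfg E.len).slr o.idx) ∧
        o.key = o.inv ∧ ReadValOK E o i ∧ o.aset = ∅
  | .visibleW =>
      ∃ j h, o.proc = .wtr j ∧ E.lbl o.inv = .invWrite j o.val ∧
        o.inv < o.key ∧ o.key < E.len ∧
        E.lbl o.key = .slrWrite (.wtr j) o.idx (.w j o.val h) ∧
        (∀ b, o.resp = some b → o.key < b) ∧
        firstW ((E.cfg E.len).slr o.idx) = some (j, o.val, h) ∧
        o.aset = ∅
  | .hiddenW =>
      ∃ j h, o.proc = .wtr j ∧ E.lbl o.inv = .invWrite j o.val ∧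
        o.inv < o.key ∧ o.key < E.len ∧
        E.lbl o.key = .slrWrite (.wtr j) o.idx (.w j o.val h) ∧
        (∀ b, o.resp = some b → o.key < b) ∧
        firstW ((E.cfg E.len).slr o.idx) ≠ some (j, o.val, h) ∧
        o.aset = ∅
  | .defA =>
      ∃ a b tM mv win, o.proc = .adt a ∧ o.resp = some b ∧
        E.lbl o.inv = .invAudit a ∧
        o.inv < tM ∧ tM < o.key ∧ o.key < b ∧
        E.lbl tM = .mRead (.adt a) mv ∧ ((E.cfg tM).ast a).pc = .aM ∧
        o.idx = mv.widx ∧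
        E.lbl o.key = .slrRead (.adt a) o.idx win ∧
        ((E.cfg o.key).ast a).pc = .aR ∧
        hasW win = true ∧
        E.lbl b = .respAudit a o.aset ∧ o.val = 0
  | .nondefA =>
      ∃ a b tM mv win, o.proc = .adt a ∧ o.resp = some b ∧
        E.lbl o.inv = .invAudit a ∧
        o.inv < tM ∧ tM < o.key ∧ o.key < b ∧
        E.lbl tM = .mRead (.adt a) mv ∧ ((E.cfg tM).ast a).pc = .aM ∧
        o.idx = mv.widx ∧
        E.lbl o.key = .slrRead (.adt a) o.idx win ∧
        ((E.cfg o.key).ast a).pc = .aR ∧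
        hasW win = false ∧
        E.lbl b = .respAudit a o.aset ∧ o.val = 0

/-- `o` terminates (its response event occurs) before `o'` starts. -/
def EndsBefore (o o' : OpData m n) : Prop :=
  ∃ b, o.resp = some b ∧ b < o'.inv

/-- `lt` is a linearization of the classified operations of `E` obeying the
    rules `R0`–`R4`: a strict total order on classified operations, ordering
    operations by increasing `idx` (`R0`); within the same `idx`, first
    silent READs, direct READs and non-definitive AUDITs ordered by their
    characteristic step on `SLR[idx]` (`R1`), then helped READs in arbitrary
    order followed by the definitive AUDITs ordered by their read of
    `SLR[idx]` (`R2`), then the hidden WRITEs ordered by their write to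
    `SLR[idx]` (`R3`), and the visible WRITE last (`R4`). -/
def LinOK (E : Exec m n v0 j0) (lt : OpData m n → OpData m n → Prop) : Prop :=
  (∀ o, IsOp E o → ¬ lt o o) ∧
  (∀ o₁ o₂ o₃, IsOp E o₁ → IsOp E o₂ → IsOp E o₃ →
      lt o₁ o₂ → lt o₂ o₃ → lt o₁ o₃) ∧
  (∀ o₁ o₂, IsOp E o₁ → IsOp E o₂ → o₁ ≠ o₂ → lt o₁ o₂ ∨ lt o₂ o₁) ∧
  (∀ o₁ o₂, IsOp E o₁ → IsOp E o₂ → o₁.idx < o₂.idx → lt o₁ o₂) ∧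
  (∀ o₁ o₂, IsOp E o₁ → IsOp E o₂ → o₁.idx = o₂.idx →
      rank o₁.kind < rank o₂.kind → lt o₁ o₂) ∧
  (∀ o₁ o₂, IsOp E o₁ → IsOp E o₂ → o₁.idx = o₂.idx →
      rank o₁.kind = rank o₂.kind → o₁.kind ≠ .helpedR →
      o₁.key < o₂.key → lt o₁ o₂)

/-! ### Auxiliary development for the proof of `writeMax_coherent` -/

section AuxProof

/-! #### Basic lemmas on windows -/

lemma hasW_append (l r : List (Entry m n)) : hasW (l ++ r) = (hasW l || hasW r) :=
  List.any_append

lemma firstW_append {l : List (Entry m n)} (r : List (Entry m n)) (h : hasW l = true) :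
    firstW (l ++ r) = firstW l := by
  induction l with
  | nil => simp [hasW] at h
  | cons e l ih =>
    cases e with
    | w j v hh => rfl
    | r i =>
      have h' : hasW l = true := by simpa [hasW, Entry.isW] using h
      simpa [firstW] using ih h'

lemma preW_append {l : List (Entry m n)} (r : List (Entry m n)) (h : hasW l = true) :
    preW (l ++ r) = preW l := by
  induction l with
  | nil => simp [hasW] at h
  | cons e l ih =>
    cases e with
    | w j v hh => rfl
    | r i =>
      have h' : hasW l = true := by simpa [hasW, Entry.isW] using h
      show insert i (preW (l ++ r)) = insert i (preW l)
      rw [ih h']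

lemma readersOf_eq_of_prefix {l L : List (Entry m n)} (h : l <+: L) (hw : hasW l = true) :
    readersOf l = readersOf L := by
  obtain ⟨r, rfl⟩ := h
  unfold readersOf
  rw [firstW_append r hw, preW_append r hw]

lemma mem_preW {l : List (Entry m n)} {i : Fin m} (hw : hasW l = false)
    (hm : Entry.r i ∈ l) : i ∈ preW l := by
  induction l with
  | nil => simp at hm
  | cons e l ih =>
    cases e with
    | w j v h => simp [hasW, Entry.isW] at hw
    | r i' =>
      have hw' : hasW l = false := by simpa [hasW, Entry.isW] using hw
      rcases List.mem_cons.1 hm with h | h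
      · obtain rfl : i = i' := by cases h; rfl
        simp [preW]
      · simp only [preW, Finset.mem_insert]
        exact Or.inr (ih hw' h)

lemma prefix_append_one {l L : List (Entry m n)} (e : Entry m n) (h : l <+: L) :
    l <+: L ++ [e] :=
  h.trans (L.prefix_append [e])

lemma hasW_of_prefix {l L : List (Entry m n)} (h : l <+: L) (hw : hasW l = true) :
    hasW L = true := by
  obtain ⟨r, rfl⟩ := h
  rw [hasW_append, hw]; rfl

/-! #### Lemmas on `wmax` -/

lemma wmax_widx_left (o v : MVal m) : o.widx ≤ (wmax o v).widx := by
  unfold wmax; split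
  · omega
  · exact le_refl _

lemma wmax_widx_right (o v : MVal m) : v.widx ≤ (wmax o v).widx := by
  unfold wmax; split
  · exact le_refl _
  · omega

lemma wmax_eq_of_widx {o v : MVal m} (h : (wmax o v).widx = o.widx) : wmax o v = o := by
  unfold wmax at h ⊢
  by_cases hc : o.widx < v.widx
  · rw [if_pos hc] at h; omega
  · rw [if_neg hc]

/-! #### Counting entries -/

/-- Is `e` the entry `.r i`? -/
def isRent (i : Fin m) : Entry m n → Bool
  | .r i' => decide (i' = i)
  | _ => false

/-- Is `e` a `w`-tuple of writer `j`? -/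
def isWent (j : Fin n) : Entry m n → Bool
  | .w j' _ _ => decide (j' = j)
  | _ => false

lemma isRent_iff {i : Fin m} {e : Entry m n} : isRent i e = true ↔ e = .r i := by
  cases e with
  | w j v h => simp [isRent]
  | r i' =>
      simp only [isRent, decide_eq_true_eq]
      constructor
      · rintro rfl; rfl
      · intro h; cases h; rfl

lemma countR_zero {l : List (Entry m n)} {i : Fin m} (h : Entry.r i ∉ l) :
    l.countP (isRent i) = 0 :=
  List.countP_eq_zero.2 fun e he hpe => h (isRent_iff.1 hpe ▸ he)

lemma countW_zero {l : List (Entry m n)} {j : Fin n} (h : ∀ v hh, Entry.w j v hh ∉ l) :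
    l.countP (isWent j) = 0 := by
  refine List.countP_eq_zero.2 fun e he hpe => ?_
  cases e with
  | w j' v hh =>
      obtain rfl : j' = j := by simpa [isWent] using hpe
      exact h v hh he
  | r i => simp [isWent] at hpe

lemma length_eq_counts (l : List (Entry m n)) :
    l.length = (∑ i : Fin m, l.countP (isRent i)) + ∑ j : Fin n, l.countP (isWent j) := by
  induction l with
  | nil => simp
  | cons e l ih =>
    cases e with
    | r i0 =>
        have h1 : ∀ i : Fin m, isRent i (Entry.r i0 : Entry m n) = decide (i0 = i) :=
          fun _ => rfl
        have h2 : ∀ j : Fin n, isWent j (Entry.r i0 : Entry m n) = false := fun _ => rfl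
        have h3 : (∑ i : Fin m, if i0 = i then 1 else 0) = 1 := by
          simp [Finset.sum_ite_eq]
        simp [List.countP_cons, ih, h1, h2, Finset.sum_add_distrib, h3]
        omega
    | w j0 v hh =>
        have h1 : ∀ i : Fin m, isRent i (Entry.w j0 v hh : Entry m n) = false :=
          fun _ => rfl
        have h2 : ∀ j : Fin n, isWent j (Entry.w j0 v hh : Entry m n) = decide (j0 = j) :=
          fun _ => rfl
        have h3 : (∑ j : Fin n, if j0 = j then 1 else 0) = 1 := by
          simp [Finset.sum_ite_eq]
        simp [List.countP_cons, ih, h1, h2, Finset.sum_add_distrib, h3]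
        omega

lemma sum_counts_le_R (l : List (Entry m n)) (hR : ∀ i : Fin m, l.countP (isRent i) ≤ 1) :
    (∑ i : Fin m, l.countP (isRent i)) ≤ m := by
  calc (∑ i : Fin m, l.countP (isRent i)) ≤ ∑ _i : Fin m, 1 :=
        Finset.sum_le_sum fun i _ => hR i
    _ = m := by simp

lemma sum_counts_le_W (l : List (Entry m n)) (hW : ∀ j : Fin n, l.countP (isWent j) ≤ 1) :
    (∑ j : Fin n, l.countP (isWent j)) ≤ n := by
  calc (∑ j : Fin n, l.countP (isWent j)) ≤ ∑ _j : Fin n, 1 :=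
        Finset.sum_le_sum fun j _ => hW j
    _ = n := by simp

lemma length_lt_of_R (l : List (Entry m n)) (i0 : Fin m)
    (hR : ∀ i : Fin m, l.countP (isRent i) ≤ 1)
    (hW : ∀ j : Fin n, l.countP (isWent j) ≤ 1)
    (h0 : l.countP (isRent i0) = 0) : l.length + 1 ≤ m + n := by
  have hsplit : (∑ i : Fin m, l.countP (isRent i))
      = l.countP (isRent i0) + ∑ i ∈ Finset.univ.erase i0, l.countP (isRent i) :=
    (Finset.add_sum_erase _ _ (Finset.mem_univ i0)).symm
  have herase : (∑ i ∈ Finset.univ.erase i0, l.countP (isRent i))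
      ≤ (Finset.univ.erase i0).card := by
    calc (∑ i ∈ Finset.univ.erase i0, l.countP (isRent i))
        ≤ ∑ _i ∈ Finset.univ.erase i0, 1 :=
          Finset.sum_le_sum fun i _ => hR i
      _ = (Finset.univ.erase i0).card := by simp
  have hcard : (Finset.univ.erase i0).card = m - 1 := by
    rw [Finset.card_erase_of_mem (Finset.mem_univ i0)]; simp
  have hm : 1 ≤ m := i0.pos
  have := sum_counts_le_W l hW
  have hlen := length_eq_counts l
  omega

lemma length_lt_of_W (l : List (Entry m n)) (j0 : Fin n)
    (hR : ∀ i : Fin m, l.countP (isRent i) ≤ 1)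
    (hW : ∀ j : Fin n, l.countP (isWent j) ≤ 1)
    (h0 : l.countP (isWent j0) = 0) : l.length + 1 ≤ m + n := by
  have hsplit : (∑ j : Fin n, l.countP (isWent j))
      = l.countP (isWent j0) + ∑ j ∈ Finset.univ.erase j0, l.countP (isWent j) :=
    (Finset.add_sum_erase _ _ (Finset.mem_univ j0)).symm
  have herase : (∑ j ∈ Finset.univ.erase j0, l.countP (isWent j))
      ≤ (Finset.univ.erase j0).card := by
    calc (∑ j ∈ Finset.univ.erase j0, l.countP (isWent j))
        ≤ ∑ _j ∈ Finset.univ.erase j0, 1 :=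
          Finset.sum_le_sum fun j _ => hW j
      _ = (Finset.univ.erase j0).card := by simp
  have hcard : (Finset.univ.erase j0).card = n - 1 := by
    rw [Finset.card_erase_of_mem (Finset.mem_univ j0)]; simp
  have hn : 1 ≤ n := j0.pos
  have := sum_counts_le_R l hR
  have hlen := length_eq_counts l
  omega

lemma slide_eq_append (k : ℕ) (l : List (Entry m n)) (e : Entry m n)
    (h : l.length + 1 ≤ k) : slide k l e = l ++ [e] := by
  unfold slide
  have h0 : (l ++ [e]).length - k = 0 := by simp; omega
  simp only [h0, List.drop_zero]

/-! #### The inductive invariant -/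

/-- Invariant attached to the state of reader `i`. -/
def RGood (slr : ℤ → List (Entry m n)) (Mw : ℤ) (i : Fin m) (s : RState m n) : Prop :=
  (∀ x, Entry.r i ∈ slr x → x ≤ s.lsr) ∧
  match s.pc with
  | .idle | .precheck | .retNow | .helpVal => True
  | .preM => s.win <+: slr s.lsr ∧ hasW s.win = true
  | .preHelp => s.win <+: slr s.lsr ∧ hasW s.win = true ∧ s.mc.widx = s.lsr
  | .loopM => s.lsr ≤ Mw ∧ ∀ x, Entry.r i ∈ slr x → x < Mw
  | .annH => s.mc.widx = s.lsr ∧ ∀ x, Entry.r i ∈ slr x → x < s.lsr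
  | .wSLR => s.mc.widx = s.lsr ∧ ∀ x, Entry.r i ∈ slr x → x < s.lsr
  | .rSLR => s.mc.widx = s.lsr ∧ Entry.r i ∈ slr s.lsr
  | .gVal => s.mc.widx = s.lsr ∧ s.win <+: slr s.lsr ∧ Entry.r i ∈ s.win
  | .helpChk => s.mc.widx = s.lsr ∧ s.win <+: slr s.lsr ∧ Entry.r i ∈ s.win
  | .loopEnd => (hasW s.win = true → s.lsr < Mw) ∧ (hasW s.win = false → Entry.r i ∈ s.win)

/-- Invariant attached to the state of writer `j`. -/
def WGood (slr : ℤ → List (Entry m n)) (Mw : ℤ) (j : Fin n) (s : WState m n) : Prop :=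
  match s.pc with
  | .idle | .readM => ∀ x v h, Entry.w j v h ∈ slr x → x < Mw
  | .scanH | .scanS | .post =>
      s.mc.widx ≤ Mw ∧ ∀ x v h, Entry.w j v h ∈ slr x → x < s.mc.widx
  | .postR =>
      s.mc.widx ≤ Mw ∧ hasW (slr s.mc.widx) = true ∧
        ∀ x v h, Entry.w j v h ∈ slr x → x ≤ s.mc.widx
  | .postV | .postM =>
      s.mc.widx ≤ Mw ∧ s.win <+: slr s.mc.widx ∧ hasW s.win = true ∧
        ∀ x v h, Entry.w j v h ∈ slr x → x ≤ s.mc.widx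
  | .wret => ∀ x v h, Entry.w j v h ∈ slr x → x < Mw

/-- Global invariant on the shared memory. -/
def Glob (slr : ℤ → List (Entry m n)) (Mw : ℤ) : Prop :=
  0 ≤ Mw ∧ (∀ x, hasW (slr x) = true → x ≤ Mw) ∧
  (∀ (i : Fin m) (x : ℤ), (slr x).countP (isRent i) ≤ 1) ∧
  (∀ (j : Fin n) (x : ℤ), (slr x).countP (isWent j) ≤ 1)

/-- The full inductive invariant. -/
def Inv (c : Config m n) : Prop :=
  Glob c.slr c.M.widx ∧ (∀ i, RGood c.slr c.M.widx i (c.rst i)) ∧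
  (∀ j, WGood c.slr c.M.widx j (c.wst j))

lemma RGood_mono {slr : ℤ → List (Entry m n)} {Mw Mw' : ℤ} {i : Fin m} {s : RState m n}
    (h : RGood slr Mw i s) (hM : Mw ≤ Mw') : RGood slr Mw' i s := by
  obtain ⟨ha, hb⟩ := h
  refine ⟨ha, ?_⟩
  cases hpc : s.pc <;> simp only [RGood, hpc] at hb ⊢ <;> try exact hb
  · exact ⟨hb.1.trans hM, fun x hx => lt_of_lt_of_le (hb.2 x hx) hM⟩
  · exact ⟨fun hw => lt_of_lt_of_le (hb.1 hw) hM, hb.2⟩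

lemma WGood_mono {slr : ℤ → List (Entry m n)} {Mw Mw' : ℤ} {j : Fin n} {s : WState m n}
    (h : WGood slr Mw j s) (hM : Mw ≤ Mw') : WGood slr Mw' j s := by
  cases hpc : s.pc <;> simp only [WGood, hpc] at h ⊢
  · exact fun x v hh hm => lt_of_lt_of_le (h x v hh hm) hM
  · exact fun x v hh hm => lt_of_lt_of_le (h x v hh hm) hM
  · exact ⟨h.1.trans hM, h.2⟩
  · exact ⟨h.1.trans hM, h.2⟩
  · exact ⟨h.1.trans hM, h.2⟩
  · exact ⟨h.1.trans hM, h.2.1, h.2.2⟩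
  · exact ⟨h.1.trans hM, h.2.1, h.2.2.1, h.2.2.2⟩
  · exact ⟨h.1.trans hM, h.2.1, h.2.2.1, h.2.2.2⟩
  · exact fun x v hh hm => lt_of_lt_of_le (h x v hh hm) hM

/-- Effect of appending an entry `e ≠ .r i` on the invariant of reader `i`. -/
lemma RGood_append {slr slr' : ℤ → List (Entry m n)} {Mw : ℤ} {i : Fin m} {s : RState m n}
    {e : Entry m n}
    (h : RGood slr Mw i s)
    (hx : ∀ x, slr' x = slr x ∨ slr' x = slr x ++ [e])
    (he : e ≠ Entry.r i) : RGood slr' Mw i s := by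
  have hmem : ∀ x, Entry.r i ∈ slr' x ↔ Entry.r i ∈ slr x := by
    intro x
    rcases hx x with hx' | hx'
    · rw [hx']
    · rw [hx']
      simp only [List.mem_append, List.mem_singleton]
      exact ⟨fun h' => h'.elim id (fun h'' => absurd h''.symm he), Or.inl⟩
  have hpre : ∀ x l, l <+: slr x → l <+: slr' x := by
    intro x l hl
    rcases hx x with hx' | hx' <;> rw [hx']
    · exact hl
    · exact prefix_append_one e hl
  obtain ⟨ha, hb⟩ := h
  refine ⟨fun x hm => ha x ((hmem x).1 hm), ?_⟩
  cases hpc : s.pc <;> simp only [RGood, hpc] at hb ⊢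
  · exact ⟨hpre _ _ hb.1, hb.2⟩
  · exact ⟨hpre _ _ hb.1, hb.2.1, hb.2.2⟩
  · exact ⟨hb.1, fun x hm => hb.2 x ((hmem x).1 hm)⟩
  · exact ⟨hb.1, fun x hm => hb.2 x ((hmem x).1 hm)⟩
  · exact ⟨hb.1, fun x hm => hb.2 x ((hmem x).1 hm)⟩
  · exact ⟨hb.1, (hmem _).2 hb.2⟩
  · exact ⟨hb.1, hpre _ _ hb.2.1, hb.2.2⟩
  · exact ⟨hb.1, hpre _ _ hb.2.1, hb.2.2⟩
  · exact hb

/-- Effect of appending an entry that is not a `w`-tuple of writer `j`. -/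
lemma WGood_append {slr slr' : ℤ → List (Entry m n)} {Mw : ℤ} {j : Fin n} {s : WState m n}
    {e : Entry m n}
    (h : WGood slr Mw j s)
    (hx : ∀ x, slr' x = slr x ∨ slr' x = slr x ++ [e])
    (he : ∀ v hh, e ≠ Entry.w j v hh) : WGood slr' Mw j s := by
  have hmem : ∀ x v hh, Entry.w j v hh ∈ slr' x ↔ Entry.w j v hh ∈ slr x := by
    intro x v hh
    rcases hx x with hx' | hx'
    · rw [hx']
    · rw [hx']
      simp only [List.mem_append, List.mem_singleton]
      exact ⟨fun h' => h'.elim id (fun h'' => absurd h''.symm (he v hh)), Or.inl⟩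
  have hpre : ∀ x l, l <+: slr x → l <+: slr' x := by
    intro x l hl
    rcases hx x with hx' | hx' <;> rw [hx']
    · exact hl
    · exact prefix_append_one e hl
  have hhasW : ∀ x, hasW (slr x) = true → hasW (slr' x) = true := by
    intro x hw
    rcases hx x with hx' | hx' <;> rw [hx']
    · exact hw
    · rw [hasW_append, hw]; rfl
  cases hpc : s.pc <;> simp only [WGood, hpc] at h ⊢
  · exact fun x v hh hm => h x v hh ((hmem x v hh).1 hm)
  · exact fun x v hh hm => h x v hh ((hmem x v hh).1 hm)
  · exact ⟨h.1, fun x v hh hm => h.2 x v hh ((hmem x v hh).1 hm)⟩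
  · exact ⟨h.1, fun x v hh hm => h.2 x v hh ((hmem x v hh).1 hm)⟩
  · exact ⟨h.1, fun x v hh hm => h.2 x v hh ((hmem x v hh).1 hm)⟩
  · exact ⟨h.1, hhasW _ h.2.1, fun x v hh hm => h.2.2 x v hh ((hmem x v hh).1 hm)⟩
  · exact ⟨h.1, hpre _ _ h.2.1, h.2.2.1, fun x v hh hm => h.2.2.2 x v hh ((hmem x v hh).1 hm)⟩
  · exact ⟨h.1, hpre _ _ h.2.1, h.2.2.1, fun x v hh hm => h.2.2.2 x v hh ((hmem x v hh).1 hm)⟩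
  · exact fun x v hh hm => h x v hh ((hmem x v hh).1 hm)

lemma update_forall {ι : Type*} {α : ι → Sort*} [DecidableEq ι] {f : ∀ k, α k} {i : ι}
    {x : α i} {P : ∀ k, α k → Prop} (h : ∀ k, P k (f k)) (hx : P i x) :
    ∀ k, P k (Function.update f i x k) := by
  intro k
  rcases eq_or_ne k i with rfl | hne
  · simpa using hx
  · rw [Function.update_of_ne hne]; exact h k

lemma update_forall' {ι : Type*} {α : ι → Sort*} [DecidableEq ι] {f : ∀ k, α k} {i : ι}
    {x : α i} {P : ∀ k, α k → Prop} (h : ∀ k, k ≠ i → P k (f k)) (hx : P i x) :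
    ∀ k, P k (Function.update f i x k) := by
  intro k
  rcases eq_or_ne k i with rfl | hne
  · simpa using hx
  · rw [Function.update_of_ne hne]; exact h k hne

lemma Inv_upR {c : Config m n} {i : Fin m} {s' : RState m n}
    (hG : Glob c.slr c.M.widx)
    (hw : ∀ j, WGood c.slr c.M.widx j (c.wst j))
    (hr : ∀ k, RGood c.slr c.M.widx k (Function.update c.rst i s' k)) :
    Inv (upR c i s') := ⟨hG, hr, hw⟩

lemma Inv_upW {c : Config m n} {j : Fin n} {s' : WState m n}
    (hG : Glob c.slr c.M.widx)
    (hr : ∀ i, RGood c.slr c.M.widx i (c.rst i))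
    (hw : ∀ k, WGood c.slr c.M.widx k (Function.update c.wst j s' k)) :
    Inv (upW c j s') := ⟨hG, hr, hw⟩

lemma Inv_upA {c : Config m n} {a : ℕ} {s' : AState m n} (h : Inv c) :
    Inv (upA c a s') := ⟨h.1, h.2.1, h.2.2⟩

lemma Inv_upR_H {c : Config m n} {i : Fin m} {s' : RState m n} {H' : Fin m → ℤ}
    (hG : Glob c.slr c.M.widx)
    (hw : ∀ j, WGood c.slr c.M.widx j (c.wst j))
    (hr : ∀ k, RGood c.slr c.M.widx k (Function.update c.rst i s' k)) :
    Inv { upR c i s' with H := H' } := ⟨hG, hr, hw⟩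

lemma Inv_upR_M {c : Config m n} {i : Fin m} {s' : RState m n} {M' : MVal m}
    (hG : Glob c.slr M'.widx)
    (hw : ∀ j, WGood c.slr M'.widx j (c.wst j))
    (hr : ∀ k, RGood c.slr M'.widx k (Function.update c.rst i s' k)) :
    Inv { upR c i s' with M := M' } := ⟨hG, hr, hw⟩

lemma Inv_upW_M {c : Config m n} {j : Fin n} {s' : WState m n} {M' : MVal m}
    (hG : Glob c.slr M'.widx)
    (hr : ∀ i, RGood c.slr M'.widx i (c.rst i))
    (hw : ∀ k, WGood c.slr M'.widx k (Function.update c.wst j s' k)) :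
    Inv { upW c j s' with M := M' } := ⟨hG, hr, hw⟩

lemma Inv_upR_slr {c : Config m n} {i : Fin m} {s' : RState m n} {f : ℤ → List (Entry m n)}
    (hG : Glob f c.M.widx)
    (hw : ∀ j, WGood f c.M.widx j (c.wst j))
    (hr : ∀ k, RGood f c.M.widx k (Function.update c.rst i s' k)) :
    Inv { upR c i s' with slr := f } := ⟨hG, hr, hw⟩

lemma Inv_upW_slr {c : Config m n} {j : Fin n} {s' : WState m n} {f : ℤ → List (Entry m n)}
    (hG : Glob f c.M.widx)
    (hr : ∀ i, RGood f c.M.widx i (c.rst i))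
    (hw : ∀ k, WGood f c.M.widx k (Function.update c.wst j s' k)) :
    Inv { upW c j s' with slr := f } := ⟨hG, hr, hw⟩

lemma init_inv : Inv (init m n v0 j0) := by
  refine ⟨⟨le_refl 0, ?_, ?_, ?_⟩, ?_, ?_⟩
  · intro x hw
    by_cases hx : x = -1
    · subst hx; norm_num [init]
    · simp only [init, if_neg hx] at hw
      simp [hasW] at hw
  · intro i x
    by_cases hx : x = -1
    · subst hx
      simp [init, isRent]
    · simp [init, if_neg hx]
  · intro j x
    by_cases hx : x = -1
    · subst hx
      have : ([Entry.w j0 v0 (∅ : Finset (Fin m))]).countP (isWent j) ≤ 1 :=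
        le_trans (List.countP_le_length) (by simp)
      simpa [init] using this
    · simp [init, if_neg hx]
  · intro i
    refine ⟨?_, trivial⟩
    intro x hm
    by_cases hx : x = -1
    · subst hx; simp [init] at hm
    · simp [init, if_neg hx] at hm
  · intro j
    intro x v h hm
    by_cases hx : x = -1
    · subst hx; norm_num [init]
    · simp [init, if_neg hx] at hm

lemma stepInv {c c' : Config m n} {l : Lbl m n} (hI : Inv c) (hs : Step c l c') : Inv c' := by
  obtain ⟨⟨hM0, hG2, hcR, hcW⟩, hR, hW⟩ := hI
  have hGlob : Glob c.slr c.M.widx := ⟨hM0, hG2, hcR, hcW⟩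
  cases l with
  | invRead i =>
      obtain ⟨hpc, rfl⟩ := hs
      refine Inv_upR hGlob hW (update_forall hR ?_)
      obtain ⟨ha, _⟩ := hR i
      refine ⟨ha, ?_⟩
      by_cases h0 : (0:ℤ) ≤ (c.rst i).lsr
      · simp only [if_pos h0]
      · simp only [if_neg h0]
        refine ⟨by omega, fun x hm => ?_⟩
        have := ha x hm
        omega
  | respRead i v =>
      obtain ⟨hpc, hv, rfl⟩ := hs
      exact Inv_upR hGlob hW (update_forall hR ⟨(hR i).1, trivial⟩)
  | invWrite j v =>
      obtain ⟨hpc, rfl⟩ := hs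
      refine Inv_upW hGlob hR (update_forall hW ?_)
      have hw := hW j
      rw [WGood, hpc] at hw
      exact hw
  | respWrite j =>
      obtain ⟨hpc, rfl⟩ := hs
      refine Inv_upW hGlob hR (update_forall hW ?_)
      have hw := hW j
      rw [WGood, hpc] at hw
      exact hw
  | invAudit a =>
      obtain ⟨hpc, rfl⟩ := hs
      exact Inv_upA ⟨hGlob, hR, hW⟩
  | respAudit a A =>
      obtain ⟨hpc, hA, rfl⟩ := hs
      exact Inv_upA ⟨hGlob, hR, hW⟩
  | slrRead p x win =>
      obtain ⟨hwin, hrest⟩ := hs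
      cases p with
      | rdr i =>
          rcases hrest with ⟨hpc, hx, rfl⟩ | ⟨hpc, hx, rfl⟩ | ⟨hpc, hx, rfl⟩ | ⟨hpc, hx, rfl⟩
          · -- precheck
            refine Inv_upR hGlob hW (update_forall hR ?_)
            refine ⟨(hR i).1, ?_⟩
            by_cases hw : hasW win
            · simp only [if_pos hw]
              subst hx; subst hwin
              exact ⟨List.prefix_refl _, hw⟩
            · simp only [if_neg hw]
          · -- helpVal
            exact Inv_upR hGlob hW (update_forall hR ⟨(hR i).1, trivial⟩)
          · -- rSLR → gVal
            refine Inv_upR hGlob hW (update_forall hR ?_)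
            have hb := hR i
            rw [RGood, hpc] at hb
            refine ⟨hb.1, hb.2.1, ?_, ?_⟩
            · subst hx; subst hwin; exact List.prefix_refl _
            · subst hx; subst hwin; exact hb.2.2
          · -- gVal → helpChk
            refine Inv_upR hGlob hW (update_forall hR ?_)
            have hb := hR i
            rw [RGood, hpc] at hb
            exact ⟨hb.1, hb.2.1, hb.2.2.1, hb.2.2.2⟩
      | wtr j =>
          rcases hrest with ⟨hpc, hx, hk, rfl⟩ | ⟨hpc, hx, rfl⟩ | ⟨hpc, hx, rfl⟩
          · -- scanS → scanH
            refine Inv_upW hGlob hR (update_forall hW ?_)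
            have hb := hW j
            rw [WGood, hpc] at hb
            exact ⟨hb.1, hb.2⟩
          · -- postR → postV
            refine Inv_upW hGlob hR (update_forall hW ?_)
            have hb := hW j
            rw [WGood, hpc] at hb
            refine ⟨hb.1, ?_, ?_, hb.2.2⟩
            · subst hx; subst hwin; exact List.prefix_refl _
            · subst hx; subst hwin; exact hb.2.1
          · -- postV → postM
            refine Inv_upW hGlob hR (update_forall hW ?_)
            have hb := hW j
            rw [WGood, hpc] at hb
            exact ⟨hb.1, hb.2.1, hb.2.2.1, hb.2.2.2⟩
      | adt a =>
          rcases hrest with ⟨hpc, hx, rfl⟩ | ⟨hpc, hx, rfl⟩ <;>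
            exact Inv_upA ⟨hGlob, hR, hW⟩
  | slrWrite p x e =>
      cases p with
      | rdr i =>
          obtain ⟨hpc, hx, he, rfl⟩ := hs
          subst hx; subst he
          have hb := hR i
          rw [RGood, hpc] at hb
          obtain ⟨ha, hmcw, hstrict⟩ := hb
          have hnotmem : Entry.r i ∉ c.slr (c.rst i).lsr := fun hm =>
            absurd (hstrict _ hm) (lt_irrefl _)
          have cnt0 : (c.slr (c.rst i).lsr).countP (isRent i) = 0 := countR_zero hnotmem
          have hlen : (c.slr (c.rst i).lsr).length + 1 ≤ m + n :=
            length_lt_of_R _ i (fun i' => hcR i' _) (fun j' => hcW j' _) cnt0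
          have happ : slide (m + n) (c.slr (c.rst i).lsr) (Entry.r i)
              = c.slr (c.rst i).lsr ++ [Entry.r i] := slide_eq_append _ _ _ hlen
          set slr' := Function.update c.slr (c.rst i).lsr
            (slide (m + n) (c.slr (c.rst i).lsr) (Entry.r i)) with hslr'
          have hup : ∀ y, slr' y = c.slr y ∨
              (y = (c.rst i).lsr ∧ slr' y = c.slr y ++ [Entry.r i]) := by
            intro y
            rcases eq_or_ne y ((c.rst i).lsr) with rfl | hne
            · exact Or.inr ⟨rfl, by rw [hslr', Function.update_self, happ]⟩
            · exact Or.inl (by rw [hslr', Function.update_of_ne hne])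
          have hup' : ∀ y, slr' y = c.slr y ∨ slr' y = c.slr y ++ [Entry.r i] := by
            intro y; rcases hup y with h | ⟨_, h⟩
            · exact Or.inl h
            · exact Or.inr h
          have hself : slr' ((c.rst i).lsr) = c.slr ((c.rst i).lsr) ++ [Entry.r i] := by
            rw [hslr', Function.update_self, happ]
          refine Inv_upR_slr ⟨hM0, ?_, ?_, ?_⟩ ?_ ?_
          · -- G2
            intro y hw
            rcases hup y with h | ⟨_, h⟩
            · exact hG2 y (by rwa [h] at hw)
            · rw [h, hasW_append] at hw
              refine hG2 y ?_
              simpa [hasW, Entry.isW] using hw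
          · -- countR
            intro i' y
            rcases hup y with h | ⟨hy, h⟩
            · rw [h]; exact hcR i' y
            · rw [h, List.countP_append]
              rcases eq_or_ne i' i with rfl | hne
              · subst hy
                rw [cnt0]
                have h1 : ([Entry.r i'] : List (Entry m n)).countP (isRent i') ≤ 1 :=
                  le_trans (List.countP_le_length) (by simp)
                omega
              · have h0 : ([Entry.r i] : List (Entry m n)).countP (isRent i') = 0 := by
                  simp [List.countP, List.countP.go, isRent, Ne.symm hne]
                rw [h0]
                simpa using hcR i' y
          · -- countW
            intro j' y
            rcases hup y with h | ⟨hy, h⟩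
            · rw [h]; exact hcW j' y
            · rw [h, List.countP_append]
              have h0 : ([Entry.r i] : List (Entry m n)).countP (isWent j') = 0 := by
                simp [List.countP, List.countP.go, isWent]
              rw [h0]
              simpa using hcW j' y
          · -- writers
            intro j'
            refine WGood_append (hW j') hup' ?_
            intro v hh hcontra
            cases hcontra
          · -- readers
            refine update_forall' (fun k hk => RGood_append (hR k) hup' ?_) ?_
            · intro hcontra
              exact hk (by cases hcontra; rfl)
            · refine ⟨?_, hmcw, ?_⟩
              · intro y hm
                rcases hup y with h | ⟨hy, h⟩
                · exact le_of_lt (hstrict y (by rwa [h] at hm))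
                · exact le_of_eq hy
              · rw [hself]
                simp
      | wtr j =>
          obtain ⟨hpc, hx, he, rfl⟩ := hs
          subst hx; subst he
          have hb := hW j
          rw [WGood, hpc] at hb
          obtain ⟨hle, hstrict⟩ := hb
          have hnotmem : ∀ v hh, Entry.w j v hh ∉ c.slr (c.wst j).mc.widx := fun v hh hm =>
            absurd (hstrict _ v hh hm) (lt_irrefl _)
          have cnt0 : (c.slr (c.wst j).mc.widx).countP (isWent j) = 0 := countW_zero hnotmem
          have hlen : (c.slr (c.wst j).mc.widx).length + 1 ≤ m + n :=
            length_lt_of_W _ j (fun i' => hcR i' _) (fun j' => hcW j' _) cnt0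
          have happ : slide (m + n) (c.slr (c.wst j).mc.widx)
              (Entry.w j (c.wst j).v (c.wst j).toHelp)
              = c.slr (c.wst j).mc.widx ++ [Entry.w j (c.wst j).v (c.wst j).toHelp] :=
            slide_eq_append _ _ _ hlen
          set slr' := Function.update c.slr (c.wst j).mc.widx
            (slide (m + n) (c.slr (c.wst j).mc.widx)
              (Entry.w j (c.wst j).v (c.wst j).toHelp)) with hslr'
          have hup : ∀ y, slr' y = c.slr y ∨
              (y = (c.wst j).mc.widx ∧
                slr' y = c.slr y ++ [Entry.w j (c.wst j).v (c.wst j).toHelp]) := by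
            intro y
            rcases eq_or_ne y ((c.wst j).mc.widx) with rfl | hne
            · exact Or.inr ⟨rfl, by rw [hslr', Function.update_self, happ]⟩
            · exact Or.inl (by rw [hslr', Function.update_of_ne hne])
          have hup' : ∀ y, slr' y = c.slr y ∨
              slr' y = c.slr y ++ [Entry.w j (c.wst j).v (c.wst j).toHelp] := by
            intro y; rcases hup y with h | ⟨_, h⟩
            · exact Or.inl h
            · exact Or.inr h
          have hself : slr' ((c.wst j).mc.widx)
              = c.slr ((c.wst j).mc.widx) ++ [Entry.w j (c.wst j).v (c.wst j).toHelp] := by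
            rw [hslr', Function.update_self, happ]
          refine Inv_upW_slr ⟨hM0, ?_, ?_, ?_⟩ ?_ ?_
          · -- G2
            intro y hw
            rcases hup y with h | ⟨hy, h⟩
            · exact hG2 y (by rwa [h] at hw)
            · rw [hy]; exact hle
          · -- countR
            intro i' y
            rcases hup y with h | ⟨hy, h⟩
            · rw [h]; exact hcR i' y
            · rw [h, List.countP_append]
              have h0 : ([Entry.w j (c.wst j).v (c.wst j).toHelp] :
                  List (Entry m n)).countP (isRent i') = 0 := by
                simp [List.countP, List.countP.go, isRent]
              rw [h0]
              simpa using hcR i' y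
          · -- countW
            intro j' y
            rcases hup y with h | ⟨hy, h⟩
            · rw [h]; exact hcW j' y
            · rw [h, List.countP_append]
              rcases eq_or_ne j' j with rfl | hne
              · subst hy
                rw [cnt0]
                have h1 : ([Entry.w j' (c.wst j').v (c.wst j').toHelp] :
                    List (Entry m n)).countP (isWent j') ≤ 1 :=
                  le_trans (List.countP_le_length) (by simp)
                omega
              · have h0 : ([Entry.w j (c.wst j).v (c.wst j).toHelp] :
                    List (Entry m n)).countP (isWent j') = 0 := by
                  simp [List.countP, List.countP.go, isWent, Ne.symm hne]
                rw [h0]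
                simpa using hcW j' y
          · -- readers
            intro i'
            refine RGood_append (hR i') hup' ?_
            intro hcontra
            cases hcontra
          · -- writers
            refine update_forall' (fun k hk => WGood_append (hW k) hup' ?_) ?_
            · intro v hh hcontra
              cases hcontra
              exact hk rfl
            · refine ⟨hle, ?_, ?_⟩
              · rw [hself, hasW_append]
                simp [hasW, Entry.isW]
              · intro y v hh hm
                rcases hup y with h | ⟨hy, h⟩
                · exact le_of_lt (hstrict y v hh (by rwa [h] at hm))
                · exact le_of_eq hy
      | adt a => exact hs.elim
  | mRead p v =>
      obtain ⟨hv, hrest⟩ := hs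
      cases p with
      | rdr i =>
          rcases hrest with ⟨hpc, rfl⟩ | ⟨hpc, rfl⟩
          · -- preM
            refine Inv_upR hGlob hW (update_forall hR ?_)
            have hb := hR i
            rw [RGood, hpc] at hb
            obtain ⟨ha, hpre, hhw⟩ := hb
            refine ⟨ha, ?_⟩
            by_cases heq : v.widx = (c.rst i).lsr
            · simp only [if_pos heq]
              exact ⟨hpre, hhw, heq⟩
            · simp only [if_neg heq]
              have hlsrle : (c.rst i).lsr ≤ c.M.widx :=
                hG2 _ (hasW_of_prefix hpre hhw)
              have hlt : (c.rst i).lsr < c.M.widx := by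
                subst hv; omega
              exact ⟨le_of_lt hlt, fun x hm => lt_of_le_of_lt (ha x hm) hlt⟩
          · -- loopM
            refine Inv_upR hGlob hW (update_forall hR ?_)
            have hb := hR i
            rw [RGood, hpc] at hb
            obtain ⟨ha, hlsr, hstrict⟩ := hb
            by_cases hcond : (c.rst i).lsr < v.ridx i
            · simp only [if_pos hcond]
              exact ⟨fun x hm => le_trans (ha x hm) (le_of_lt hcond), trivial⟩
            · simp only [if_neg hcond]
              subst hv
              exact ⟨fun x hm => le_of_lt (hstrict x hm), rfl, fun x hm => hstrict x hm⟩
      | wtr j =>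
          obtain ⟨hpc, rfl⟩ := hrest
          refine Inv_upW hGlob hR (update_forall hW ?_)
          have hb := hW j
          rw [WGood, hpc] at hb
          subst hv
          exact ⟨le_refl _, hb⟩
      | adt a =>
          obtain ⟨hpc, rfl⟩ := hrest
          exact Inv_upA ⟨hGlob, hR, hW⟩
  | mWrite p v =>
      cases p with
      | rdr i =>
          rcases hs with ⟨hpc, hv, rfl⟩ | ⟨hpc, hwinw, hv, rfl⟩
          · -- preHelp → loopM
            have hb := hR i
            rw [RGood, hpc] at hb
            obtain ⟨ha, _, _, hmcw⟩ := hb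
            have hvw : v.widx = (c.rst i).lsr + 1 := by rw [hv]; rfl
            have hge : (c.rst i).lsr + 1 ≤ (wmax c.M v).widx := hvw ▸ wmax_widx_right c.M v
            have hmono : c.M.widx ≤ (wmax c.M v).widx := wmax_widx_left c.M v
            refine Inv_upR_M ⟨le_trans hM0 hmono, fun y hw => le_trans (hG2 y hw) hmono,
              hcR, hcW⟩ (fun j' => WGood_mono (hW j') hmono)
              (update_forall' (fun k _ => RGood_mono (hR k) hmono) ?_)
            refine ⟨ha, ?_, fun y hm => ?_⟩
            · show (c.rst i).lsr ≤ (wmax c.M v).widx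
              omega
            · show y < (wmax c.M v).widx
              have := ha y hm
              omega
          · -- helpChk → loopEnd
            have hb := hR i
            rw [RGood, hpc] at hb
            obtain ⟨ha, hmcw, hpre, hmem⟩ := hb
            have hvw : v.widx = (c.rst i).lsr + 1 := by rw [hv]; rfl
            have hge : (c.rst i).lsr + 1 ≤ (wmax c.M v).widx := hvw ▸ wmax_widx_right c.M v
            have hmono : c.M.widx ≤ (wmax c.M v).widx := wmax_widx_left c.M v
            refine Inv_upR_M ⟨le_trans hM0 hmono, fun y hw => le_trans (hG2 y hw) hmono,
              hcR, hcW⟩ (fun j' => WGood_mono (hW j') hmono)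
              (update_forall' (fun k _ => RGood_mono (hR k) hmono) ?_)
            refine ⟨ha, fun _ => ?_, fun hcontra => ?_⟩
            · show (c.rst i).lsr < (wmax c.M v).widx
              omega
            · rw [hwinw] at hcontra
              cases hcontra
      | wtr j =>
          obtain ⟨hpc, hv, rfl⟩ := hs
          have hb := hW j
          rw [WGood, hpc] at hb
          obtain ⟨hle, _, _, hentries⟩ := hb
          have hvw : v.widx = (c.wst j).mc.widx + 1 := by rw [hv]; rfl
          have hge : (c.wst j).mc.widx + 1 ≤ (wmax c.M v).widx := hvw ▸ wmax_widx_right c.M v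
          have hmono : c.M.widx ≤ (wmax c.M v).widx := wmax_widx_left c.M v
          refine Inv_upW_M ⟨le_trans hM0 hmono, fun y hw => le_trans (hG2 y hw) hmono,
            hcR, hcW⟩ (fun i' => RGood_mono (hR i') hmono)
            (update_forall' (fun k _ => WGood_mono (hW k) hmono) ?_)
          intro y w hh hm
          have := hentries y w hh hm
          omega
      | adt a => exact hs.elim
  | hRead j k a =>
      obtain ⟨hpc, hk, ha, rfl⟩ := hs
      refine Inv_upW hGlob hR (update_forall hW ?_)
      have hb := hW j
      simp only [WGood, hpc] at hb
      by_cases hcond : (c.wst j).mc.ridx k < a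
      · simp only [if_pos hcond]
        exact hb
      · simp only [if_neg hcond, WGood, hpc]
        exact hb
  | hWrite i x =>
      obtain ⟨hpc, hx, rfl⟩ := hs
      refine Inv_upR_H hGlob hW (update_forall hR ?_)
      have hb := hR i
      rw [RGood, hpc] at hb
      exact ⟨hb.1, hb.2.1, hb.2.2⟩
  | tau p =>
      cases p with
      | rdr i =>
          rcases hs with ⟨hpc, hwinw, rfl⟩ | ⟨hpc, rfl⟩
          · -- helpChk (no w) → loopEnd
            have hb := hR i
            rw [RGood, hpc] at hb
            obtain ⟨ha, hmcw, hpre, hmem⟩ := hb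
            refine Inv_upR hGlob hW (update_forall hR ?_)
            refine ⟨ha, fun hcontra => ?_, fun _ => hmem⟩
            rw [hwinw] at hcontra
            cases hcontra
          · -- loopEnd → retNow / loopM
            have hb := hR i
            rw [RGood, hpc] at hb
            obtain ⟨ha, hwt, hwf⟩ := hb
            refine Inv_upR hGlob hW (update_forall hR ?_)
            refine ⟨ha, ?_⟩
            by_cases hcond : i ∈ readersOf (c.rst i).win
            · simp only [if_pos hcond]
            · simp only [if_neg hcond]
              by_cases hw : hasW (c.rst i).win
              · have hlt := hwt hw
                exact ⟨le_of_lt hlt, fun x hm => lt_of_le_of_lt (ha x hm) hlt⟩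
              · exfalso
                apply hcond
                have := hwf (by simpa using hw)
                exact Finset.mem_union_left _ (mem_preW (by simpa using hw) this)
      | wtr j =>
          obtain ⟨hpc, hkm, rfl⟩ := hs
          refine Inv_upW hGlob hR (update_forall hW ?_)
          have hb := hW j
          rw [WGood, hpc] at hb
          exact hb
      | adt a => exact hs.elim

lemma step_M {c c' : Config m n} {l : Lbl m n} (hs : Step c l c') :
    c.M.widx ≤ c'.M.widx ∧ (c'.M.widx = c.M.widx → c'.M = c.M) ∧
      (c'.M = c.M ∨ ∃ p v, l = Lbl.mWrite p v ∧ c'.M = wmax c.M v) := by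
  cases l with
  | invRead i => obtain ⟨_, rfl⟩ := hs; exact ⟨le_refl _, fun _ => rfl, Or.inl rfl⟩
  | respRead i v => obtain ⟨_, _, rfl⟩ := hs; exact ⟨le_refl _, fun _ => rfl, Or.inl rfl⟩
  | invWrite j v => obtain ⟨_, rfl⟩ := hs; exact ⟨le_refl _, fun _ => rfl, Or.inl rfl⟩
  | respWrite j => obtain ⟨_, rfl⟩ := hs; exact ⟨le_refl _, fun _ => rfl, Or.inl rfl⟩
  | invAudit a => obtain ⟨_, rfl⟩ := hs; exact ⟨le_refl _, fun _ => rfl, Or.inl rfl⟩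
  | respAudit a A => obtain ⟨_, _, rfl⟩ := hs; exact ⟨le_refl _, fun _ => rfl, Or.inl rfl⟩
  | slrRead p x win =>
      obtain ⟨_, hrest⟩ := hs
      cases p with
      | rdr i =>
          rcases hrest with ⟨_, _, rfl⟩ | ⟨_, _, rfl⟩ | ⟨_, _, rfl⟩ | ⟨_, _, rfl⟩ <;>
            exact ⟨le_refl _, fun _ => rfl, Or.inl rfl⟩
      | wtr j =>
          rcases hrest with ⟨_, _, _, rfl⟩ | ⟨_, _, rfl⟩ | ⟨_, _, rfl⟩ <;>
            exact ⟨le_refl _, fun _ => rfl, Or.inl rfl⟩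
      | adt a =>
          rcases hrest with ⟨_, _, rfl⟩ | ⟨_, _, rfl⟩ <;>
            exact ⟨le_refl _, fun _ => rfl, Or.inl rfl⟩
  | slrWrite p x e =>
      cases p with
      | rdr i => obtain ⟨_, _, _, rfl⟩ := hs; exact ⟨le_refl _, fun _ => rfl, Or.inl rfl⟩
      | wtr j => obtain ⟨_, _, _, rfl⟩ := hs; exact ⟨le_refl _, fun _ => rfl, Or.inl rfl⟩
      | adt a => exact hs.elim
  | mRead p v =>
      obtain ⟨_, hrest⟩ := hs
      cases p with
      | rdr i =>
          rcases hrest with ⟨_, rfl⟩ | ⟨_, rfl⟩ <;>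
            exact ⟨le_refl _, fun _ => rfl, Or.inl rfl⟩
      | wtr j => obtain ⟨_, rfl⟩ := hrest; exact ⟨le_refl _, fun _ => rfl, Or.inl rfl⟩
      | adt a => obtain ⟨_, rfl⟩ := hrest; exact ⟨le_refl _, fun _ => rfl, Or.inl rfl⟩
  | mWrite p v =>
      cases p with
      | rdr i =>
          rcases hs with ⟨_, _, rfl⟩ | ⟨_, _, _, rfl⟩ <;>
            exact ⟨wmax_widx_left _ _, fun h => wmax_eq_of_widx h,
              Or.inr ⟨_, v, rfl, rfl⟩⟩
      | wtr j =>
          obtain ⟨_, _, rfl⟩ := hs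
          exact ⟨wmax_widx_left _ _, fun h => wmax_eq_of_widx h, Or.inr ⟨_, v, rfl, rfl⟩⟩
      | adt a => exact hs.elim
  | hRead j k a => obtain ⟨_, _, _, rfl⟩ := hs; exact ⟨le_refl _, fun _ => rfl, Or.inl rfl⟩
  | hWrite i x => obtain ⟨_, _, rfl⟩ := hs; exact ⟨le_refl _, fun _ => rfl, Or.inl rfl⟩
  | tau p =>
      cases p with
      | rdr i =>
          rcases hs with ⟨_, _, rfl⟩ | ⟨_, rfl⟩ <;>
            exact ⟨le_refl _, fun _ => rfl, Or.inl rfl⟩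
      | wtr j => obtain ⟨_, _, rfl⟩ := hs; exact ⟨le_refl _, fun _ => rfl, Or.inl rfl⟩
      | adt a => exact hs.elim

lemma step_slr {c c' : Config m n} {l : Lbl m n} (hI : Inv c) (hs : Step c l c') :
    ∀ x, c.slr x <+: c'.slr x := by
  obtain ⟨⟨hM0, hG2, hcR, hcW⟩, hR, hW⟩ := hI
  cases l with
  | invRead i => obtain ⟨_, rfl⟩ := hs; exact fun x => List.prefix_refl _
  | respRead i v => obtain ⟨_, _, rfl⟩ := hs; exact fun x => List.prefix_refl _
  | invWrite j v => obtain ⟨_, rfl⟩ := hs; exact fun x => List.prefix_refl _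
  | respWrite j => obtain ⟨_, rfl⟩ := hs; exact fun x => List.prefix_refl _
  | invAudit a => obtain ⟨_, rfl⟩ := hs; exact fun x => List.prefix_refl _
  | respAudit a A => obtain ⟨_, _, rfl⟩ := hs; exact fun x => List.prefix_refl _
  | slrRead p x win =>
      obtain ⟨_, hrest⟩ := hs
      cases p with
      | rdr i =>
          rcases hrest with ⟨_, _, rfl⟩ | ⟨_, _, rfl⟩ | ⟨_, _, rfl⟩ | ⟨_, _, rfl⟩ <;>
            exact fun x => List.prefix_refl _
      | wtr j =>
          rcases hrest with ⟨_, _, _, rfl⟩ | ⟨_, _, rfl⟩ | ⟨_, _, rfl⟩ <;>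
            exact fun x => List.prefix_refl _
      | adt a =>
          rcases hrest with ⟨_, _, rfl⟩ | ⟨_, _, rfl⟩ <;>
            exact fun x => List.prefix_refl _
  | slrWrite p x e =>
      cases p with
      | rdr i =>
          obtain ⟨hpc, hx, he, rfl⟩ := hs
          subst hx; subst he
          have hb := hR i
          rw [RGood, hpc] at hb
          obtain ⟨ha, hmcw, hstrict⟩ := hb
          have hnotmem : Entry.r i ∉ c.slr (c.rst i).lsr := fun hm =>
            absurd (hstrict _ hm) (lt_irrefl _)
          have cnt0 : (c.slr (c.rst i).lsr).countP (isRent i) = 0 := countR_zero hnotmem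
          have hlen : (c.slr (c.rst i).lsr).length + 1 ≤ m + n :=
            length_lt_of_R _ i (fun i' => hcR i' _) (fun j' => hcW j' _) cnt0
          have happ : slide (m + n) (c.slr (c.rst i).lsr) (Entry.r i)
              = c.slr (c.rst i).lsr ++ [Entry.r i] := slide_eq_append _ _ _ hlen
          intro y
          rcases eq_or_ne y ((c.rst i).lsr) with rfl | hne
          · show c.slr _ <+: Function.update c.slr _ _ _
            rw [Function.update_self, happ]
            exact List.prefix_append _ _
          · show c.slr _ <+: Function.update c.slr _ _ _
            rw [Function.update_of_ne hne]
      | wtr j =>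
          obtain ⟨hpc, hx, he, rfl⟩ := hs
          subst hx; subst he
          have hb := hW j
          rw [WGood, hpc] at hb
          obtain ⟨hle, hstrict⟩ := hb
          have hnotmem : ∀ v hh, Entry.w j v hh ∉ c.slr (c.wst j).mc.widx := fun v hh hm =>
            absurd (hstrict _ v hh hm) (lt_irrefl _)
          have cnt0 : (c.slr (c.wst j).mc.widx).countP (isWent j) = 0 := countW_zero hnotmem
          have hlen : (c.slr (c.wst j).mc.widx).length + 1 ≤ m + n :=
            length_lt_of_W _ j (fun i' => hcR i' _) (fun j' => hcW j' _) cnt0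
          have happ : slide (m + n) (c.slr (c.wst j).mc.widx)
              (Entry.w j (c.wst j).v (c.wst j).toHelp)
              = c.slr (c.wst j).mc.widx ++ [Entry.w j (c.wst j).v (c.wst j).toHelp] :=
            slide_eq_append _ _ _ hlen
          intro y
          rcases eq_or_ne y ((c.wst j).mc.widx) with rfl | hne
          · show c.slr _ <+: Function.update c.slr _ _ _
            rw [Function.update_self, happ]
            exact List.prefix_append _ _
          · show c.slr _ <+: Function.update c.slr _ _ _
            rw [Function.update_of_ne hne]
      | adt a => exact hs.elim
  | mRead p v =>
      obtain ⟨_, hrest⟩ := hs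
      cases p with
      | rdr i =>
          rcases hrest with ⟨_, rfl⟩ | ⟨_, rfl⟩ <;> exact fun x => List.prefix_refl _
      | wtr j => obtain ⟨_, rfl⟩ := hrest; exact fun x => List.prefix_refl _
      | adt a => obtain ⟨_, rfl⟩ := hrest; exact fun x => List.prefix_refl _
  | mWrite p v =>
      cases p with
      | rdr i =>
          rcases hs with ⟨_, _, rfl⟩ | ⟨_, _, _, rfl⟩ <;> exact fun x => List.prefix_refl _
      | wtr j => obtain ⟨_, _, rfl⟩ := hs; exact fun x => List.prefix_refl _
      | adt a => exact hs.elim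
  | hRead j k a => obtain ⟨_, _, _, rfl⟩ := hs; exact fun x => List.prefix_refl _
  | hWrite i x => obtain ⟨_, _, rfl⟩ := hs; exact fun x => List.prefix_refl _
  | tau p =>
      cases p with
      | rdr i =>
          rcases hs with ⟨_, _, rfl⟩ | ⟨_, rfl⟩ <;> exact fun x => List.prefix_refl _
      | wtr j => obtain ⟨_, _, rfl⟩ := hs; exact fun x => List.prefix_refl _
      | adt a => exact hs.elim

lemma update_field_or {ι α β : Type*} [DecidableEq ι] (f : ι → α) (i0 : ι) (s' : α)
    (g : α → β) (i : ι) :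
    g (Function.update f i0 s' i) = g (f i) ∨ (i = i0 ∧ g (Function.update f i0 s' i) = g s') := by
  rcases eq_or_ne i i0 with rfl | hne
  · right; rw [Function.update_self]; exact ⟨rfl, rfl⟩
  · left; rw [Function.update_of_ne hne]

lemma step_mc {c c' : Config m n} {l : Lbl m n} (hs : Step c l c') :
    (∀ i, (c'.rst i).mc = (c.rst i).mc ∨ (c'.rst i).mc = c.M) ∧
    (∀ j, (c'.wst j).mc = (c.wst j).mc ∨ (c'.wst j).mc = c.M) := by
  cases l with
  | invRead i =>
      obtain ⟨_, rfl⟩ := hs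
      refine ⟨fun k => ?_, fun k => Or.inl rfl⟩
      rcases update_field_or c.rst i _ RState.mc k with h | ⟨rfl, h⟩ <;> exact Or.inl h
  | respRead i v =>
      obtain ⟨_, _, rfl⟩ := hs
      refine ⟨fun k => ?_, fun k => Or.inl rfl⟩
      rcases update_field_or c.rst i _ RState.mc k with h | ⟨rfl, h⟩ <;> exact Or.inl h
  | invWrite j v =>
      obtain ⟨_, rfl⟩ := hs
      refine ⟨fun k => Or.inl rfl, fun k => ?_⟩
      rcases update_field_or c.wst j _ WState.mc k with h | ⟨rfl, h⟩ <;> exact Or.inl h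
  | respWrite j =>
      obtain ⟨_, rfl⟩ := hs
      refine ⟨fun k => Or.inl rfl, fun k => ?_⟩
      rcases update_field_or c.wst j _ WState.mc k with h | ⟨rfl, h⟩ <;> exact Or.inl h
  | invAudit a => obtain ⟨_, rfl⟩ := hs; exact ⟨fun k => Or.inl rfl, fun k => Or.inl rfl⟩
  | respAudit a A => obtain ⟨_, _, rfl⟩ := hs; exact ⟨fun k => Or.inl rfl, fun k => Or.inl rfl⟩
  | slrRead p x win =>
      obtain ⟨_, hrest⟩ := hs
      cases p with
      | rdr i =>
          rcases hrest with ⟨_, _, rfl⟩ | ⟨_, _, rfl⟩ | ⟨_, _, rfl⟩ | ⟨_, _, rfl⟩ <;>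
          · refine ⟨fun k => ?_, fun k => Or.inl rfl⟩
            rcases update_field_or c.rst i _ RState.mc k with h | ⟨rfl, h⟩ <;> exact Or.inl h
      | wtr j =>
          rcases hrest with ⟨_, _, hk, rfl⟩ | ⟨_, _, rfl⟩ | ⟨_, _, rfl⟩ <;>
          · refine ⟨fun k => Or.inl rfl, fun k => ?_⟩
            rcases update_field_or c.wst j _ WState.mc k with h | ⟨rfl, h⟩ <;> exact Or.inl h
      | adt a =>
          rcases hrest with ⟨_, _, rfl⟩ | ⟨_, _, rfl⟩ <;>
            exact ⟨fun k => Or.inl rfl, fun k => Or.inl rfl⟩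
  | slrWrite p x e =>
      cases p with
      | rdr i =>
          obtain ⟨_, _, _, rfl⟩ := hs
          refine ⟨fun k => ?_, fun k => Or.inl rfl⟩
          rcases update_field_or c.rst i _ RState.mc k with h | ⟨rfl, h⟩ <;> exact Or.inl h
      | wtr j =>
          obtain ⟨_, _, _, rfl⟩ := hs
          refine ⟨fun k => Or.inl rfl, fun k => ?_⟩
          rcases update_field_or c.wst j _ WState.mc k with h | ⟨rfl, h⟩ <;> exact Or.inl h
      | adt a => exact hs.elim
  | mRead p v =>
      obtain ⟨hv, hrest⟩ := hs
      cases p with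
      | rdr i =>
          rcases hrest with ⟨_, rfl⟩ | ⟨_, rfl⟩
          · refine ⟨fun k => ?_, fun k => Or.inl rfl⟩
            rcases update_field_or c.rst i _ RState.mc k with h | ⟨rfl, h⟩
            · exact Or.inl h
            · subst hv; exact Or.inr h
          · by_cases hcond : (c.rst i).lsr < v.ridx i
            · simp only [if_pos hcond]
              refine ⟨fun k => ?_, fun k => Or.inl rfl⟩
              rcases update_field_or c.rst i _ RState.mc k with h | ⟨rfl, h⟩
              · exact Or.inl h
              · subst hv; exact Or.inr h
            · simp only [if_neg hcond]
              refine ⟨fun k => ?_, fun k => Or.inl rfl⟩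
              rcases update_field_or c.rst i _ RState.mc k with h | ⟨rfl, h⟩
              · exact Or.inl h
              · subst hv; exact Or.inr h
      | wtr j =>
          obtain ⟨_, rfl⟩ := hrest
          refine ⟨fun k => Or.inl rfl, fun k => ?_⟩
          rcases update_field_or c.wst j _ WState.mc k with h | ⟨rfl, h⟩
          · exact Or.inl h
          · subst hv; exact Or.inr h
      | adt a =>
          obtain ⟨_, rfl⟩ := hrest
          exact ⟨fun k => Or.inl rfl, fun k => Or.inl rfl⟩
  | mWrite p v =>
      cases p with
      | rdr i =>
          rcases hs with ⟨_, _, rfl⟩ | ⟨_, _, _, rfl⟩ <;>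
          · refine ⟨fun k => ?_, fun k => Or.inl rfl⟩
            rcases update_field_or c.rst i _ RState.mc k with h | ⟨rfl, h⟩ <;> exact Or.inl h
      | wtr j =>
          obtain ⟨_, _, rfl⟩ := hs
          refine ⟨fun k => Or.inl rfl, fun k => ?_⟩
          rcases update_field_or c.wst j _ WState.mc k with h | ⟨rfl, h⟩ <;> exact Or.inl h
      | adt a => exact hs.elim
  | hRead j k a =>
      obtain ⟨_, _, _, rfl⟩ := hs
      by_cases hcond : (c.wst j).mc.ridx k < a
      · simp only [if_pos hcond]
        refine ⟨fun k' => Or.inl rfl, fun k' => ?_⟩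
        rcases update_field_or c.wst j _ WState.mc k' with h | ⟨rfl, h⟩ <;> exact Or.inl h
      · simp only [if_neg hcond]
        refine ⟨fun k' => Or.inl rfl, fun k' => ?_⟩
        rcases update_field_or c.wst j _ WState.mc k' with h | ⟨rfl, h⟩ <;> exact Or.inl h
  | hWrite i x =>
      obtain ⟨_, _, rfl⟩ := hs
      refine ⟨fun k => ?_, fun k => Or.inl rfl⟩
      rcases update_field_or c.rst i _ RState.mc k with h | ⟨rfl, h⟩ <;> exact Or.inl h
  | tau p =>
      cases p with
      | rdr i =>
          rcases hs with ⟨_, _, rfl⟩ | ⟨_, rfl⟩ <;>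
          · refine ⟨fun k => ?_, fun k => Or.inl rfl⟩
            rcases update_field_or c.rst i _ RState.mc k with h | ⟨rfl, h⟩ <;> exact Or.inl h
      | wtr j =>
          obtain ⟨_, _, rfl⟩ := hs
          refine ⟨fun k => Or.inl rfl, fun k => ?_⟩
          rcases update_field_or c.wst j _ WState.mc k with h | ⟨rfl, h⟩ <;> exact Or.inl h
      | adt a => exact hs.elim

/-! #### Execution-level lemmas -/

lemma inv_all (E : Exec m n v0 j0) : ∀ t, t ≤ E.len → Inv (E.cfg t) := by
  intro t
  induction t with
  | zero => intro _; rw [E.h0]; exact init_inv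
  | succ t ih =>
      intro h
      exact stepInv (ih (by omega)) (E.hstep t (by omega))

lemma slr_mono (E : Exec m n v0 j0) : ∀ t' t, t ≤ t' → t' ≤ E.len →
    ∀ x, (E.cfg t).slr x <+: (E.cfg t').slr x := by
  intro t'
  induction t' with
  | zero =>
      intro t h _ x
      obtain rfl : t = 0 := Nat.le_zero.mp h
      exact List.prefix_refl _
  | succ k ih =>
      intro t h hlen x
      rcases Nat.lt_or_ge t (k + 1) with h' | h'
      · exact (ih t (by omega) (by omega) x).trans
          (step_slr (inv_all E k (by omega)) (E.hstep k (by omega)) x)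
      · obtain rfl : t = k + 1 := by omega
        exact List.prefix_refl _

lemma widx_mono (E : Exec m n v0 j0) : ∀ t' t, t ≤ t' → t' ≤ E.len →
    (E.cfg t).M.widx ≤ (E.cfg t').M.widx := by
  intro t'
  induction t' with
  | zero =>
      intro t h _
      obtain rfl : t = 0 := Nat.le_zero.mp h
      exact le_refl _
  | succ k ih =>
      intro t h hlen
      rcases Nat.lt_or_ge t (k + 1) with h' | h'
      · exact (ih t (by omega) (by omega)).trans (step_M (E.hstep k (by omega))).1
      · obtain rfl : t = k + 1 := by omega
        exact le_refl _

lemma M_const (E : Exec m n v0 j0) : ∀ t' t, t ≤ t' → t' ≤ E.len →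
    (E.cfg t').M.widx = (E.cfg t).M.widx → (E.cfg t').M = (E.cfg t).M := by
  intro t'
  induction t' with
  | zero =>
      intro t h _ _
      obtain rfl : t = 0 := Nat.le_zero.mp h
      rfl
  | succ k ih =>
      intro t h hlen heq
      rcases Nat.lt_or_ge t (k + 1) with h' | h'
      · have h1 := widx_mono E k t (by omega) (by omega)
        have h2 := (step_M (E.hstep k (by omega))).1
        have hkeq : (E.cfg (k+1)).M.widx = (E.cfg k).M.widx := by omega
        have hMk := (step_M (E.hstep k (by omega))).2.1 hkeq
        rw [hMk]
        exact ih t (by omega) (by omega) (by omega)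
      · obtain rfl : t = k + 1 := by omega
        rfl

/-- `a` is a value taken by the max register `M` at some point of `E`. -/
def Snap (E : Exec m n v0 j0) (a : MVal m) : Prop := ∃ u, u ≤ E.len ∧ (E.cfg u).M = a

lemma snap_uniq (E : Exec m n v0 j0) {a b : MVal m} (ha : Snap E a) (hb : Snap E b)
    (h : a.widx = b.widx) : a = b := by
  obtain ⟨u, hu, rfl⟩ := ha
  obtain ⟨u', hu', rfl⟩ := hb
  rcases le_total u u' with hle | hle
  · exact (M_const E u' u hle hu' h.symm).symm
  · exact M_const E u u' hle hu h

lemma snap_nonneg (E : Exec m n v0 j0) {a : MVal m} (ha : Snap E a) : 0 ≤ a.widx := by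
  obtain ⟨u, hu, rfl⟩ := ha
  exact (inv_all E u hu).1.1

lemma wmax_ne {o v : MVal m} (h : wmax o v ≠ o) : wmax o v = v := by
  unfold wmax at *
  by_cases hc : o.widx < v.widx
  · rw [if_pos hc]
  · rw [if_neg hc] at h; exact absurd rfl h

lemma snap_origin (E : Exec m n v0 j0) {a : MVal m} (ha : Snap E a) (h0 : a.widx ≠ 0) :
    ∃ t p, t < E.len ∧ E.lbl t = Lbl.mWrite p a := by
  obtain ⟨u, hu, rfl⟩ := ha
  induction u with
  | zero =>
      exfalso
      apply h0
      rw [E.h0]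
      rfl
  | succ k ih =>
      by_cases heq : (E.cfg (k + 1)).M = (E.cfg k).M
      · rw [heq]
        rw [heq] at h0
        exact ih (by omega) h0
      · rcases (step_M (E.hstep k (by omega))).2.2 with h | ⟨p, v, hl, hMv⟩
        · exact absurd h heq
        · have hv : wmax (E.cfg k).M v = v := wmax_ne (by rw [← hMv]; exact heq)
          refine ⟨k, p, by omega, ?_⟩
          rw [hl, hMv, hv]

lemma mc_snap (E : Exec m n v0 j0) : ∀ t, t ≤ E.len →
    (∀ i, Snap E ((E.cfg t).rst i).mc) ∧ (∀ j, Snap E ((E.cfg t).wst j).mc) := by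
  intro t
  induction t with
  | zero =>
      intro _
      constructor <;> intro k <;> exact ⟨0, by omega, by rw [E.h0]; rfl⟩
  | succ t ih =>
      intro h
      obtain ⟨ihR, ihW⟩ := ih (by omega)
      obtain ⟨hmr, hmw⟩ := step_mc (E.hstep t (by omega))
      constructor
      · intro i
        rcases hmr i with h' | h'
        · rw [h']; exact ihR i
        · rw [h']; exact ⟨t, by omega, rfl⟩
      · intro j
        rcases hmw j with h' | h'
        · rw [h']; exact ihW j
        · rw [h']; exact ⟨t, by omega, rfl⟩

/-- Characterization of the values written to `M` by `writeMax` operations. -/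
lemma char (E : Exec m n v0 j0) {t : ℕ} {p : Proc m n} {v : MVal m}
    (ht : t < E.len) (hl : E.lbl t = .mWrite p v) :
    ∃ mc win, Snap E mc ∧ v.widx = mc.widx + 1 ∧ hasW win = true ∧
      win <+: (E.cfg E.len).slr mc.widx ∧
      v.ridx = (fun j => if j ∈ readersOf win then mc.widx else mc.ridx j) := by
  have hstep := E.hstep t ht
  rw [hl] at hstep
  have hI := inv_all E t (by omega)
  obtain ⟨⟨hM0, hG2, hcR, hcW⟩, hR, hW⟩ := hI
  have hmono : ∀ x, (E.cfg t).slr x <+: (E.cfg E.len).slr x :=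
    slr_mono E E.len t (by omega) (le_refl _)
  cases p with
  | rdr i =>
      rcases hstep with ⟨hpc, hv, _⟩ | ⟨hpc, hhw', hv, _⟩
      · have hb := hR i
        rw [RGood, hpc] at hb
        obtain ⟨_, hpre, hhw, hmcw⟩ := hb
        refine ⟨((E.cfg t).rst i).mc, ((E.cfg t).rst i).win,
          (mc_snap E t (by omega)).1 i, ?_, hhw, ?_, ?_⟩
        · rw [hv]; show ((E.cfg t).rst i).lsr + 1 = _; rw [hmcw]
        · rw [hmcw]; exact hpre.trans (hmono _)
        · rw [hv]
          show (fun j => if j ∈ readersOf ((E.cfg t).rst i).win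
            then ((E.cfg t).rst i).lsr else ((E.cfg t).rst i).mc.ridx j) = _
          rw [hmcw]
      · have hb := hR i
        rw [RGood, hpc] at hb
        obtain ⟨_, hmcw, hpre, _⟩ := hb
        refine ⟨((E.cfg t).rst i).mc, ((E.cfg t).rst i).win,
          (mc_snap E t (by omega)).1 i, ?_, hhw', ?_, ?_⟩
        · rw [hv]; show ((E.cfg t).rst i).lsr + 1 = _; rw [hmcw]
        · rw [hmcw]; exact hpre.trans (hmono _)
        · rw [hv]
          show (fun j => if j ∈ readersOf ((E.cfg t).rst i).win
            then ((E.cfg t).rst i).lsr else ((E.cfg t).rst i).mc.ridx j) = _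
          rw [hmcw]
  | wtr j =>
      obtain ⟨hpc, hv, _⟩ := hstep
      have hb := hW j
      rw [WGood, hpc] at hb
      obtain ⟨hle, hpre, hhw, _⟩ := hb
      refine ⟨((E.cfg t).wst j).mc, ((E.cfg t).wst j).win,
        (mc_snap E t (by omega)).2 j, ?_, hhw, hpre.trans (hmono _), ?_⟩
      · rw [hv]; rfl
      · rw [hv]; rfl
  | adt a => exact hstep.elim

lemma snap_ridx_bounds (E : Exec m n v0 j0) :
    ∀ N (a : MVal m), Snap E a → a.widx.toNat = N →
      ∀ j, -1 ≤ a.ridx j ∧ a.ridx j ≤ a.widx - 1 := by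
  intro N
  induction N using Nat.strong_induction_on with
  | _ N ihN =>
    intro a ha hN j
    have h0 : 0 ≤ a.widx := snap_nonneg E ha
    by_cases hz : a.widx = 0
    · have hmk : a = (E.cfg 0).M := by
        refine snap_uniq E ha ⟨0, by omega, rfl⟩ ?_
        rw [E.h0]
        exact hz
      rw [hmk, E.h0]
      norm_num [init]
    · obtain ⟨t, p, ht, hl⟩ := snap_origin E ha hz
      obtain ⟨mc, win, hmc, hwidx, hhw, hpre, hridx⟩ := char E ht hl
      have hmc0 : 0 ≤ mc.widx := snap_nonneg E hmc
      have hmcN : mc.widx.toNat < N := by omega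
      have hb := ihN _ hmcN mc hmc rfl j
      rw [hridx]
      by_cases hmem : j ∈ readersOf win
      · simp only [if_pos hmem]
        omega
      · simp only [if_neg hmem]
        omega

lemma key (E : Exec m n v0 j0) :
    ∀ N (a : MVal m), Snap E a → a.widx.toNat = N →
      ∀ t (p : Proc m n) (v : MVal m), t < E.len → E.lbl t = .mWrite p v →
        (v.widx = a.widx → v.ridx = a.ridx) ∧
        (v.widx < a.widx → ∀ j, v.ridx j ≤ a.ridx j) := by
  intro N
  induction N using Nat.strong_induction_on with
  | _ N ihN =>
    intro a ha hN t p v ht hl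
    obtain ⟨mc, win, hmc, hwidx, hhw, hpre, hridx⟩ := char E ht hl
    have hmc0 : 0 ≤ mc.widx := snap_nonneg E hmc
    have hvr : ∀ j, v.ridx j ≤ v.widx - 1 := by
      intro j
      have hb := snap_ridx_bounds E _ mc hmc rfl j
      rw [hridx]
      by_cases hmem : j ∈ readersOf win
      · simp only [if_pos hmem]; omega
      · simp only [if_neg hmem]; omega
    constructor
    · intro heq
      have hz : a.widx ≠ 0 := by omega
      obtain ⟨t0, p0, ht0, hl0⟩ := snap_origin E ha hz
      obtain ⟨mc0, win0, hmc0', hwidx0, hhw0, hpre0, hridx0⟩ := char E ht0 hl0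
      have hmceq : mc = mc0 := snap_uniq E hmc hmc0' (by omega)
      subst hmceq
      have hreq : readersOf win = readersOf win0 :=
        (readersOf_eq_of_prefix hpre hhw).trans (readersOf_eq_of_prefix hpre0 hhw0).symm
      rw [hridx, hridx0, hreq]
    · intro hlt j
      have hz : a.widx ≠ 0 := by omega
      obtain ⟨t0, p0, ht0, hl0⟩ := snap_origin E ha hz
      obtain ⟨mc0, win0, hmc0', hwidx0, hhw0, hpre0, hridx0⟩ := char E ht0 hl0
      have hmc00 : 0 ≤ mc0.widx := snap_nonneg E hmc0'
      rw [hridx0]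
      by_cases hmem : j ∈ readersOf win0
      · simp only [if_pos hmem]
        have := hvr j
        omega
      · simp only [if_neg hmem]
        have hmc0N : mc0.widx.toNat < N := by omega
        rcases eq_or_lt_of_le (show v.widx ≤ mc0.widx by omega) with heq | hlt'
        · have := (ihN _ hmc0N mc0 hmc0' rfl t p v ht hl).1 heq
          rw [this]
        · exact (ihN _ hmc0N mc0 hmc0' rfl t p v ht hl).2 hlt' j

lemma snap_mono (E : Exec m n v0 j0) {a b : MVal m} (ha : Snap E a) (hb : Snap E b)
    (h : a.widx ≤ b.widx) : ∀ j, a.ridx j ≤ b.ridx j := by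
  intro j
  rcases eq_or_lt_of_le h with heq | hlt
  · rw [snap_uniq E ha hb heq]
  · by_cases hz : a.widx = 0
    · have hmk : a = (E.cfg 0).M := by
        refine snap_uniq E ha ⟨0, by omega, rfl⟩ ?_
        rw [E.h0]
        exact hz
      have hb1 := (snap_ridx_bounds E _ b hb rfl j).1
      rw [hmk, E.h0]
      show (-1 : ℤ) ≤ b.ridx j
      omega
    · obtain ⟨t, p, ht, hl⟩ := snap_origin E ha hz
      exact (key E _ b hb rfl t p a ht hl).2 hlt j

end AuxProof

/-- Lemma `same_ridx`.  In any execution of Algorithm 1, if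
`writeMax(k, iv, _)` and `writeMax(k', iv', _)` are both applied to the max
register `M`, then (1) if `k = k'` then `iv = iv'`, and (2) if `k < k'` then
`iv ≤ iv'` componentwise.  Consequently, the successive `m`-vectors stored in
`M.ridx` form an increasing sequence under the componentwise order. -/
theorem writeMax_coherent (m n : ℕ) (v0 : Val) (j0 : Fin n) (E : Exec m n v0 j0) :
    (∀ t₁ t₂ (p q : Proc m n) (v v' : MVal m), t₁ < E.len → t₂ < E.len →
        E.lbl t₁ = .mWrite p v → E.lbl t₂ = .mWrite q v' →
        (v.widx = v'.widx → v.ridx = v'.ridx) ∧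
        (v.widx < v'.widx → ∀ i, v.ridx i ≤ v'.ridx i)) ∧
    (∀ t₁ t₂, t₁ ≤ t₂ → t₂ ≤ E.len →
        ∀ i, (E.cfg t₁).M.ridx i ≤ (E.cfg t₂).M.ridx i) := by
  constructor
  · intro t₁ t₂ p q v v' h1 h2 hl1 hl2
    obtain ⟨mc, win, hmc, hwidx, hhw, hpre, hridx⟩ := char E h1 hl1
    obtain ⟨mc', win', hmc', hwidx', hhw', hpre', hridx'⟩ := char E h2 hl2
    have hmc0 := snap_nonneg E hmc
    have hmc0' := snap_nonneg E hmc'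
    constructor
    · intro heq
      have hmceq : mc = mc' := snap_uniq E hmc hmc' (by omega)
      subst hmceq
      have hreq : readersOf win = readersOf win' :=
        (readersOf_eq_of_prefix hpre hhw).trans (readersOf_eq_of_prefix hpre' hhw').symm
      rw [hridx, hridx', hreq]
    · intro hlt i
      have hvr : v.ridx i ≤ v.widx - 1 := by
        have hb := snap_ridx_bounds E _ mc hmc rfl i
        rw [hridx]
        by_cases hmem : i ∈ readersOf win
        · simp only [if_pos hmem]; omega
        · simp only [if_neg hmem]; omega
      rw [hridx']
      by_cases hmem : i ∈ readersOf win'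
      · simp only [if_pos hmem]; omega
      · simp only [if_neg hmem]
        rcases eq_or_lt_of_le (show v.widx ≤ mc'.widx by omega) with heq | hlt'
        · have hre := (key E _ mc' hmc' rfl t₁ p v h1 hl1).1 heq
          rw [hre]
        · exact (key E _ mc' hmc' rfl t₁ p v h1 hl1).2 hlt' i
  · have hstep1 : ∀ t, t < E.len → ∀ i, (E.cfg t).M.ridx i ≤ (E.cfg (t+1)).M.ridx i := by
      intro t ht i
      rcases (step_M (E.hstep t ht)).2.2 with hM | ⟨p, v, hl, hMv⟩
      · rw [hM]
      · rw [hMv]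
        unfold wmax
        by_cases hc : (E.cfg t).M.widx < v.widx
        · rw [if_pos hc]
          obtain ⟨mc, win, hmc, hwidx, hhw, hpre, hridx⟩ := char E ht hl
          have hsnapM : Snap E (E.cfg t).M := ⟨t, by omega, rfl⟩
          have hMb := snap_ridx_bounds E _ _ hsnapM rfl i
          rw [hridx]
          by_cases hmem : i ∈ readersOf win
          · simp only [if_pos hmem]; omega
          · simp only [if_neg hmem]
            exact snap_mono E hsnapM hmc (by omega) i
        · rw [if_neg hc]
    intro t₁ t₂ hle hlen i
    have aux : ∀ d t, t + d ≤ E.len → (E.cfg t).M.ridx i ≤ (E.cfg (t + d)).M.ridx i := by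
      intro d
      induction d with
      | zero => intro t _; exact le_refl _
      | succ k ih =>
          intro t h
          exact le_trans (ih t (by omega)) (hstep1 (t + k) (by omega) i)
    have ht2 : t₂ = t₁ + (t₂ - t₁) := by omega
    rw [ht2]
    exact aux (t₂ - t₁) t₁ (by omega)

end Alg1
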